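/- arXiv:2312.17469 — 4 statements merged into one kernel-verified Lean document; each statement's English description precedes it below -/
import Mathlib

section
/- For each i with 1 ≤ i ≤ N−1, the Noumi operator T̃_i satisfies the quadratic Hecke relation (T̃_i − t·id)∘(T̃_i + id) = 0 as an operator on the ring L = K[z_1^{±1}, …, z_N^{±1}] of Laurent polynomials. -/
open scoped BigOperators
open Finset

noncomputable section

namespace RST

/-! ## Rhombic staircase tableaux -/

/-- The four Greek letters `α, β, γ, δ` used to fill tableaux. -/
inductive Greek : Type
  | A | B | G | D
  deriving DecidableEq

instance : Fintype Greek :=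
  ⟨{Greek.A, Greek.B, Greek.G, Greek.D}, by intro x; cases x <;> simp⟩

/-- The number of `0`'s (i.e. `∗`'s) in a word. -/
def nzeros (w : List ℤ) : ℕ := w.count 0

/-- `‖w‖ = length + number of zeros`. -/
def nn (w : List ℤ) : ℕ := w.length + nzeros w

/-- The tiles of the rhombic diagram `Γ(w)` (with its distinguished tiling) are indexed by
pairs `i ≤ j` such that not both `w_i = 0` and `w_j = 0`.  The tile `(i,j)` is a square if
`w_i ≠ 0 ≠ w_j`, a vertical rhombus if `w_i ≠ 0 = w_j`, and a horizontal rhombus if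
`w_i = 0 ≠ w_j`.  Tile `(i,j)` lies in the west-strip (row) of the border tile `i` and in the
north-strip (column) of the border tile `j`; the border tile `j` itself is the tile `(j,j)`
when `w_j ≠ 0`. -/
def IsTile (w : List ℤ) (i j : Fin w.length) : Prop :=
  i ≤ j ∧ ¬(w.get i = 0 ∧ w.get j = 0)

/-- `ColAbove w i' i` says that a tile `(i',j)` lies strictly above the tile `(i,j)` in the
north-strip of the column `j` (in the distinguished tiling, a north-strip consists of its
squares, ordered bottom-to-top by decreasing row index, followed by its horizontal rhombi,
ordered bottom-to-top by decreasing row index). -/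
def ColAbove (w : List ℤ) (i' i : Fin w.length) : Prop :=
  (w.get i' = 0 ∧ w.get i ≠ 0) ∨
    (w.get i' = 0 ∧ w.get i = 0 ∧ i' < i) ∨
    (w.get i' ≠ 0 ∧ w.get i ≠ 0 ∧ i' < i)

/-- A filling of the tiles of `Γ(w)` by Greek letters (`none` = empty tile). -/
abbrev Filling (w : List ℤ) : Type := Fin w.length → Fin w.length → Option Greek

/-- The defining conditions for a rhombic staircase tableau of type `w`. -/
def IsRST (w : List ℤ) (f : Filling w) : Prop :=
  (∀ i j, ¬ IsTile w i j → f i j = none) ∧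
  (∀ j, w.get j = -1 → (f j j = some Greek.B ∨ f j j = some Greek.G)) ∧
  (∀ j, w.get j = 1 → (f j j = some Greek.A ∨ f j j = some Greek.D)) ∧
  (∀ i j, w.get j = 0 → (f i j = none ∨ f i j = some Greek.B ∨ f i j = some Greek.D)) ∧
  (∀ i j, w.get i = 0 → (f i j = none ∨ f i j = some Greek.A ∨ f i j = some Greek.G)) ∧
  (∀ i j i', (f i j = some Greek.A ∨ f i j = some Greek.G) →
      IsTile w i' j → ColAbove w i' i → f i' j = none) ∧
  (∀ i j j', (f i j = some Greek.B ∨ f i j = some Greek.D) →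
      j < j' → IsTile w i j' → f i j' = none)

/-- The nearest nonempty tile to the right of `(i,j)` in its west-strip contains `g`. -/
def SeesRight (w : List ℤ) (f : Filling w) (i j : Fin w.length) (g : Greek) : Prop :=
  ∃ j' : Fin w.length, i ≤ j' ∧ j' < j ∧ f i j' = some g ∧
    ∀ j'' : Fin w.length, j' < j'' → j'' < j → f i j'' = none

/-- The nearest nonempty tile below `(i,j)` in its north-strip contains `g`. -/
def SeesBelow (w : List ℤ) (f : Filling w) (i j : Fin w.length) (g : Greek) : Prop :=
  ∃ i' : Fin w.length, IsTile w i' j ∧ ColAbove w i i' ∧ f i' j = some g ∧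
    ∀ i'' : Fin w.length, IsTile w i'' j → ColAbove w i i'' → ColAbove w i'' i' → f i'' j = none

variable {R : Type*} [CommRing R]

open Classical in
/-- The weight of the tile `(i,j)` in the filling `f` (the Greek letter it contains, if any,
times the appropriate power of `t`). -/
def tileWt (pa pb pg pd pt : R) (w : List ℤ) (f : Filling w) (i j : Fin w.length) : R :=
  if ¬ IsTile w i j then 1
  else
    match f i j with
    | some Greek.A => pa * (if w.get i = 0 then pt else 1)
    | some Greek.B => pb * (if w.get j = 0 then pt else 1)
    | some Greek.G => pg
    | some Greek.D => pd
    | none =>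
      if w.get i ≠ 0 ∧ w.get j = 0 then
        -- empty vertical rhombus
        (if SeesRight w f i j Greek.B then pt ^ 2
         else if SeesRight w f i j Greek.A ∨ SeesRight w f i j Greek.G then pt else 1)
      else if w.get i = 0 ∧ w.get j ≠ 0 then
        -- empty horizontal rhombus
        (if SeesBelow w f i j Greek.A then pt ^ 2
         else if SeesBelow w f i j Greek.B ∨ SeesBelow w f i j Greek.D then pt else 1)
      else
        -- empty square
        (if SeesRight w f i j Greek.B ∨
            ((SeesRight w f i j Greek.A ∨ SeesRight w f i j Greek.G) ∧
              (SeesBelow w f i j Greek.A ∨ SeesBelow w f i j Greek.D)) then pt else 1)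

/-- The weight `wt(T)` of a filling: the product of the weights of all its tiles. -/
def wt (pa pb pg pd pt : R) (w : List ℤ) (f : Filling w) : R :=
  ∏ i : Fin w.length, ∏ j : Fin w.length, tileWt pa pb pg pd pt w f i j

open Classical in
/-- `R(w)`: the generating polynomial of all rhombic staircase tableaux of type `w`. -/
def RR (pa pb pg pd pt : R) (w : List ℤ) : R :=
  ∑ f ∈ Finset.univ.filter (IsRST w), wt pa pb pg pd pt w f

/-- `λ_M = αβt^{M-1} - γδ`. -/
def lamM (pa pb pg pd pt : R) (M : ℕ) : R := pa * pb * pt ^ (M - 1) - pg * pd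

variable {K : Type*} [Field K]

/-- The normalized generating function
`R̃(w) = (t-1)^{N-r} / ∏_{i=2r}^{N+r-1} (αβt^i - γδ) · R(w)`. -/
def Rt (pa pb pg pd pt : K) (w : List ℤ) : K :=
  ((pt - 1) ^ (w.length - nzeros w) /
      ∏ i ∈ Finset.Ico (2 * nzeros w) (w.length + nzeros w), (pa * pb * pt ^ i - pg * pd)) *
    RR pa pb pg pd pt w

/-! ## The ring of Laurent polynomials in `z_1, …, z_N` -/

/-- The ring `L = K[z_1^{±1}, …, z_N^{±1}]` of Laurent polynomials in `N` variables. -/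
abbrev Lp (K : Type*) [Field K] (N : ℕ) : Type _ := AddMonoidAlgebra K (Fin N → ℤ)

variable {N : ℕ}

/-- The constant `c` as a Laurent polynomial. -/
def CC (c : K) : Lp K N := AddMonoidAlgebra.single 0 c

/-- The variable `z_j`. -/
def Z (j : Fin N) : Lp K N := AddMonoidAlgebra.single (Pi.single j 1) 1

/-- The inverse variable `z_j⁻¹`. -/
def Zinv (j : Fin N) : Lp K N := AddMonoidAlgebra.single (Pi.single j (-1)) 1

/-- The coefficient of the Laurent monomial `z^m` in `f`. -/
def coeff (f : Lp K N) (m : Fin N → ℤ) : K := AddMonoidAlgebra.coeff f m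

/-- `f` does not involve the variable `z_v`. -/
def IndepVar (f : Lp K N) (v : Fin N) : Prop :=
  ∀ m : Fin N → ℤ, coeff f m ≠ 0 → m v = 0

/-- `(z^m - s_{uv} z^m)/(z_u - z_v)` as a Laurent polynomial, where `s_{uv}` exchanges the
variables `z_u, z_v`:  for `p = m u ≥ r = m v` this is `∑_{k=0}^{p-r-1} z_u^{r+k} z_v^{p-1-k}`
(times the other variables), and for `p < r` it is `-∑_{k=0}^{r-p-1} z_u^{p+k} z_v^{r-1-k}`. -/
def ddMono (u v : Fin N) (m : Fin N → ℤ) : Lp K N :=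
  if m v ≤ m u then
    ∑ k ∈ Finset.range (m u - m v).toNat,
      AddMonoidAlgebra.single
        (Function.update (Function.update m u (m v + (k : ℤ))) v (m u - 1 - (k : ℤ))) (1 : K)
  else
    - ∑ k ∈ Finset.range (m v - m u).toNat,
      AddMonoidAlgebra.single
        (Function.update (Function.update m u (m u + (k : ℤ))) v (m v - 1 - (k : ℤ))) (1 : K)

/-- The divided difference `f ↦ (f - s_{uv} f)/(z_u - z_v)`. -/
def ddPair (u v : Fin N) (f : Lp K N) : Lp K N :=
  Finsupp.sum (AddMonoidAlgebra.coeff f) fun m c => CC c * ddMono u v m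

/-- Noumi's operator `T̃ = t - (t z_u - z_v) (1 - s_{uv})/(z_u - z_v)` on Laurent polynomials;
for `u, v` the positions of `z_i, z_{i+1}` this is the operator `T̃_i`, `1 ≤ i ≤ N-1`. -/
def Tmid (t : K) (u v : Fin N) (f : Lp K N) : Lp K N :=
  CC t * f - (CC t * Z u - Z v) * ddPair u v f

/-- `(z^m - s₀ z^m)/(z_v - q z_v⁻¹)` as a Laurent polynomial, where `s₀` maps `z_v ↦ q z_v⁻¹`:
for `p = m v ≥ 0` this is `∑_{k=0}^{p-1} q^k z_v^{p-1-2k}` (times the other variables), and for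
`p < 0` it is `-∑_{k=0}^{-p-1} q^{p+k} z_v^{p+1+2k}`. -/
def dd0Mono (q : K) (v : Fin N) (m : Fin N → ℤ) : Lp K N :=
  if 0 ≤ m v then
    ∑ k ∈ Finset.range (m v).toNat,
      AddMonoidAlgebra.single (Function.update m v (m v - 1 - 2 * (k : ℤ))) (q ^ (k : ℕ))
  else
    - ∑ k ∈ Finset.range (-(m v)).toNat,
      AddMonoidAlgebra.single (Function.update m v (m v + 1 + 2 * (k : ℤ))) (q ^ (m v + (k : ℤ)))

/-- The divided difference `f ↦ (f - s₀ f)/(z_v - q z_v⁻¹)`. -/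
def dd0 (q : K) (v : Fin N) (f : Lp K N) : Lp K N :=
  Finsupp.sum (AddMonoidAlgebra.coeff f) fun m c => CC c * dd0Mono q v m

/-- Noumi's operator `T̃₀ = -ac/q - (z₁-a)(z₁-c)/z₁ · (1-s₀)/(z₁ - q z₁⁻¹)`, acting on the
variable `z_v` (with `v` the position of `z₁`); here
`-(z-a)(z-c)/z = -z + (a+c) - ac z⁻¹`. -/
def T0 (a c q : K) (v : Fin N) (f : Lp K N) : Lp K N :=
  CC (-(a * c) / q) * f + (CC (a + c) - Z v - CC (a * c) * Zinv v) * dd0 q v f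

/-- Noumi's operator `T̃_N = -bd + (bz-1)(dz-1)/z · (1-s_N)/(z - z⁻¹)`, acting on the variable
`z_v` (with `v` the position of `z_N`); here `(bz-1)(dz-1)/z = bd z - (b+d) + z⁻¹`, and
`(1 - s_N)/(z - z⁻¹)` is `dd0` with `q = 1`. -/
def TN (b d : K) (v : Fin N) (f : Lp K N) : Lp K N :=
  CC (-(b * d)) * f + (CC (b * d) * Z v - CC (b + d) + Zinv v) * dd0 1 v f

/-- The operator `T̃_j` for `0 ≤ j ≤ N` (`T̃₀`, `T̃_j` with `1 ≤ j ≤ N-1`, or `T̃_N`);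
the identity for `j` out of range. -/
def TT (a b c d q t : K) (N : ℕ) (j : ℕ) : Lp K N → Lp K N :=
  if h0 : j = 0 then (if hN : 0 < N then T0 a c q ⟨0, hN⟩ else id)
  else if hj : j < N then Tmid t ⟨j - 1, by omega⟩ ⟨j, hj⟩
  else if j = N then (if hN : 0 < N then TN b d ⟨N - 1, by omega⟩ else id)
  else id

/-- The Hecke parameter `t_j` (`t₀ = -ac/q`, `t_N = -bd`, `t_j = t` otherwise). -/
def tpar (a b c d q t : K) (N : ℕ) (j : ℕ) : K :=
  if j = 0 then -(a * c) / q else if j = N then -(b * d) else t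

/-- The inverse operator `T̃_j⁻¹ = t_j⁻¹ (T̃_j + (1 - t_j))`. -/
def TTinv (a b c d q t : K) (N : ℕ) (j : ℕ) (f : Lp K N) : Lp K N :=
  CC (tpar a b c d q t N j)⁻¹ * (TT a b c d q t N j f + CC (1 - tpar a b c d q t N j) * f)

/-- Composition of a list of operators (leftmost applied last). -/
def opProd (l : List (Lp K N → Lp K N)) : Lp K N → Lp K N := l.foldr (· ∘ ·) id

/-- The Cherednik operator
`Y_i = (T̃_i T̃_{i+1} ⋯ T̃_{N-1})(T̃_N T̃_{N-1} ⋯ T̃_1 T̃_0)(T̃₁⁻¹ T̃₂⁻¹ ⋯ T̃_{i-1}⁻¹)`. -/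
def Yop (a b c d q t : K) (N : ℕ) (i : ℕ) : Lp K N → Lp K N :=
  opProd (((List.range' i (N - i)).map (TT a b c d q t N)) ++
    (((List.range (N + 1)).reverse).map (TT a b c d q t N)) ++
    ((List.range' 1 (i - 1)).map (TTinv a b c d q t N)))

/-- Exchange of the variables `z_u` and `z_v`. -/
def swapVars (u v : Fin N) (f : Lp K N) : Lp K N :=
  Finsupp.sum (AddMonoidAlgebra.coeff f) fun m c => AddMonoidAlgebra.single (m ∘ (Equiv.swap u v)) c

/-! ## The open boundary ASEP polynomials `F_μ` -/

/-- The word `μ|_{S̄}` obtained from `μ` by deleting the entries in positions of `S`. -/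
def wordOf (N : ℕ) (mu : Fin N → ℤ) (S : Finset (Fin N)) : List ℤ :=
  ((List.finRange N).filter (fun k => decide (k ∉ S))).map mu

/-- The open boundary ASEP polynomial
`F_μ(z;t) = ∑_{S ⊆ V} R̃(μ|_{S̄}) ∏_{i ∈ S} (z_i^{μ_i} - 1)` where `V = {i : μ_i ≠ 0}`. -/
def FF (pa pb pg pd pt : K) (N : ℕ) (mu : Fin N → ℤ) : Lp K N :=
  ∑ S ∈ (Finset.univ.filter fun k => mu k ≠ 0).powerset,
    CC (Rt pa pb pg pd pt (wordOf N mu S)) *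
      ∏ i ∈ S, (AddMonoidAlgebra.single (Pi.single i (mu i)) (1 : K) - 1)

/-- `μ` is a signed permutation of `λ`. -/
def IsSignedPerm (lam mu : Fin N → ℤ) : Prop :=
  ∃ σ : Equiv.Perm (Fin N), ∀ i, mu i = lam (σ i) ∨ mu i = -lam (σ i)

/-- The word `δ = ((-1)^{N-r}, 0^r)`. -/
def deltaWord (N r : ℕ) : Fin N → ℤ := fun k => if (k : ℕ) < N - r then -1 else 0

/-! ## Generic parameter fields -/

/-- The field `ℚ(a,b,c,d,q,t)` of rational functions in six parameters. -/
abbrev K6 : Type := FractionRing (MvPolynomial (Fin 6) ℚ)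

/-- The generators of `K6`. -/
def gen6 (k : Fin 6) : K6 := algebraMap (MvPolynomial (Fin 6) ℚ) K6 (MvPolynomial.X k)

/-- The parameters `a, b, c, d, q, t` in `ℚ(a,b,c,d,q,t)`. -/
def pA : K6 := gen6 0
def pB : K6 := gen6 1
def pC : K6 := gen6 2
def pD : K6 := gen6 3
def pQ : K6 := gen6 4
def pT : K6 := gen6 5

/-- The change of variables `α = -ac(1-t)/((a-1)(c-1))`. -/
def chA : K6 := -(pA * pC) * (1 - pT) / ((pA - 1) * (pC - 1))
/-- The change of variables `γ = (1-t)/((a-1)(c-1))`. -/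
def chG : K6 := (1 - pT) / ((pA - 1) * (pC - 1))
/-- The change of variables `β = -bd(1-t)/((b-1)(d-1))`. -/
def chB : K6 := -(pB * pD) * (1 - pT) / ((pB - 1) * (pD - 1))
/-- The change of variables `δ = (1-t)/((b-1)(d-1))`. -/
def chD : K6 := (1 - pT) / ((pB - 1) * (pD - 1))

/-- The field `ℚ(α,β,γ,δ,t)` of rational functions in five parameters. -/
abbrev K5 : Type := FractionRing (MvPolynomial (Fin 5) ℚ)

/-- The generators of `K5`. -/
def gen5 (k : Fin 5) : K5 := algebraMap (MvPolynomial (Fin 5) ℚ) K5 (MvPolynomial.X k)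

/-- The parameters `α, β, γ, δ, t` in `ℚ(α,β,γ,δ,t)`. -/
def vA : K5 := gen5 0
def vB : K5 := gen5 1
def vG : K5 := gen5 2
def vD : K5 := gen5 3
def vT : K5 := gen5 4

/-- Words of length `N` with entries in `{-1,0,1}` having exactly `r` zeros, as a finite set
of functions `Fin N → ℤ`. -/
def WordsF (N r : ℕ) : Finset (Fin N → ℤ) :=
  (Finset.univ.image fun g : Fin N → Fin 3 => fun k => ((g k : ℤ) - 1)).filter
    fun mu => (Finset.univ.filter fun k => mu k = 0).card = r

/-- `R(μ)` for a word given as a function `Fin N → ℤ`. -/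
def RRw (pa pb pg pd pt : R) (N : ℕ) (mu : Fin N → ℤ) : R :=
  RR pa pb pg pd pt ((List.finRange N).map mu)

open Classical in
/-- The total weighted jump rate (without the normalization `1/(N+1)`) from state `μ` to
state `ν` in the two-species open boundary ASEP. -/
def jump (pa pb pg pd pt : K) (N : ℕ) (mu nu : Fin N → ℤ) : K :=
  (∑ u : Fin N,
    if h : (u : ℕ) + 1 < N then
      ((if nu = mu ∘ Equiv.swap u ⟨(u : ℕ) + 1, h⟩ ∧
            ((mu u, mu ⟨(u : ℕ) + 1, h⟩) = (1, -1) ∨ (mu u, mu ⟨(u : ℕ) + 1, h⟩) = (1, 0) ∨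
              (mu u, mu ⟨(u : ℕ) + 1, h⟩) = (0, -1)) then pt else 0) +
        (if nu = mu ∘ Equiv.swap u ⟨(u : ℕ) + 1, h⟩ ∧
            ((mu u, mu ⟨(u : ℕ) + 1, h⟩) = (-1, 1) ∨ (mu u, mu ⟨(u : ℕ) + 1, h⟩) = (0, 1) ∨
              (mu u, mu ⟨(u : ℕ) + 1, h⟩) = (-1, 0)) then 1 else 0))
    else 0) +
  (if hN : 0 < N then
      ((if mu ⟨0, hN⟩ = -1 ∧ nu = Function.update mu ⟨0, hN⟩ 1 then pa else 0) +
        (if mu ⟨0, hN⟩ = 1 ∧ nu = Function.update mu ⟨0, hN⟩ (-1) then pg else 0) +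
        (if mu ⟨N - 1, by omega⟩ = 1 ∧ nu = Function.update mu ⟨N - 1, by omega⟩ (-1) then pb
          else 0) +
        (if mu ⟨N - 1, by omega⟩ = -1 ∧ nu = Function.update mu ⟨N - 1, by omega⟩ 1 then pd
          else 0))
    else 0)

open Classical in
/-- The one-step transition matrix of the two-species open boundary ASEP on the set of states
with exactly `r` zeros: off-diagonal entries are the jump rates divided by `N+1`, and the
diagonal entry is the complementary probability. -/
def Pmat (pa pb pg pd pt : K) (N r : ℕ) (mu nu : Fin N → ℤ) : K :=
  jump pa pb pg pd pt N mu nu / (N + 1) +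
    (if nu = mu then 1 - (∑ x ∈ WordsF N r, jump pa pb pg pd pt N mu x) / (N + 1) else 0)

/-- A list as a word-function (entries beyond the length are `0`). -/
def funOf (N : ℕ) (w : List ℤ) : Fin N → ℤ := fun k => w.getD (k : ℕ) 0

end RST


/-! The divided difference `∂ = (1 - s)/(z_u - z_v)` satisfies `(z_u - z_v) ∂ f = f - s f`.
Since `s` negates the non-zero-divisor `z_u - z_v`, `∂ f` is `s`-symmetric, and `∂` kills
symmetric polynomials. For `T̃ = t - (t z_u - z_v) ∂` and `g = T̃ f + f` one finds `s g = g`,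
hence `∂ g = 0` and `T̃ g = t g`, which is the Hecke relation `(T̃ - t)(T̃ + 1) = 0`. -/

namespace RST

open AddMonoidAlgebra Function

variable {K : Type*} [Field K] {N : ℕ}

section Exponents

variable (u v : Fin N) (m : Fin N → ℤ)

lemma update_update_comp_swap (a b : ℤ) :
    update (update (m ∘ Equiv.swap u v) u a) v b = update (update m u a) v b := by
  funext x
  rcases eq_or_ne x v with rfl | hxv
  · simp
  rcases eq_or_ne x u with rfl | hxu
  · simp [update_of_ne hxv]
  · simp [update_of_ne hxv, update_of_ne hxu, Equiv.swap_apply_of_ne_of_ne hxu hxv]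

lemma single_add_update_update_left {u v : Fin N} (huv : u ≠ v) (a b : ℤ) :
    Pi.single u 1 + update (update m u a) v b = update (update m u (a + 1)) v b := by
  funext x
  rcases eq_or_ne x v with rfl | hxv
  · simp [Ne.symm huv]
  rcases eq_or_ne x u with rfl | hxu
  · simp [update_of_ne hxv, add_comm]
  · simp [update_of_ne hxv, hxu]

lemma single_add_update_update_right (a b : ℤ) :
    Pi.single v 1 + update (update m u a) v b = update (update m u a) v (b + 1) := by
  funext x
  rcases eq_or_ne x v with rfl | hxv
  · simp [add_comm]
  · simp [hxv]

lemma comp_swap_comp_swap : (m ∘ Equiv.swap u v) ∘ Equiv.swap u v = m := by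
  funext x
  simp

lemma single_comp_swap : (Pi.single u 1 : Fin N → ℤ) ∘ Equiv.swap u v = Pi.single v 1 := by
  funext x
  simp [Pi.single_apply, Equiv.swap_apply_eq_iff]

end Exponents

section DividedDifference

variable {u v : Fin N}

lemma Z_mul_single_update_update_left (huv : u ≠ v) (m : Fin N → ℤ) (a b : ℤ) :
    (Z u : Lp K N) * single (update (update m u a) v b) 1
      = single (update (update m u (a + 1)) v b) 1 := by
  rw [Z, single_mul_single, one_mul, single_add_update_update_left m huv]

lemma Z_mul_single_update_update_right (m : Fin N → ℤ) (a b : ℤ) :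
    (Z v : Lp K N) * single (update (update m u a) v b) 1
      = single (update (update m u a) v (b + 1)) 1 := by
  rw [Z, single_mul_single, one_mul, single_add_update_update_right]

/-- The sum defining `ddMono` telescopes. -/
lemma Z_sub_Z_mul_ddMono_of_le (huv : u ≠ v) {m : Fin N → ℤ} (h : m v ≤ m u) :
    (Z u - Z v : Lp K N) * ddMono u v m = single m 1 - single (m ∘ Equiv.swap u v) 1 := by
  set E : ℕ → Lp K N := fun k =>
    single (update (update m u (m v + k)) v (m u - k)) 1 with hE
  have hstep : ∀ k ∈ Finset.range (m u - m v).toNat,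
      (Z u - Z v : Lp K N) * single (update (update m u (m v + k)) v (m u - 1 - k)) 1
        = E (k + 1) - E k := by
    intro k _
    rw [sub_mul, Z_mul_single_update_update_left huv, Z_mul_single_update_update_right, hE]
    push_cast
    ring_nf
  have hlast : E (m u - m v).toNat = single m 1 := by
    simp only [hE, Int.toNat_of_nonneg (sub_nonneg.mpr h), add_sub_cancel, sub_sub_cancel,
      update_eq_self]
  have hfirst : E 0 = single (m ∘ Equiv.swap u v) 1 := by
    simp only [hE, Nat.cast_zero, add_zero, sub_zero, Equiv.comp_swap_eq_update u v m,
      update_comm huv]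
  rw [ddMono, if_pos h, Finset.mul_sum, Finset.sum_congr rfl hstep, Finset.sum_range_sub,
    hlast, hfirst]

lemma ddMono_of_lt {m : Fin N → ℤ} (h : m u < m v) :
    (ddMono u v m : Lp K N) = -ddMono u v (m ∘ Equiv.swap u v) := by
  have hu : (m ∘ Equiv.swap u v) u = m v := by simp
  have hv : (m ∘ Equiv.swap u v) v = m u := by simp
  rw [ddMono, if_neg (not_le.mpr h), ddMono, if_pos (by omega), hu, hv]
  simp only [update_update_comp_swap]

lemma Z_sub_Z_mul_ddMono (huv : u ≠ v) (m : Fin N → ℤ) :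
    (Z u - Z v : Lp K N) * ddMono u v m = single m 1 - single (m ∘ Equiv.swap u v) 1 := by
  rcases le_or_gt (m v) (m u) with h | h
  · exact Z_sub_Z_mul_ddMono_of_le huv h
  · have h' : (m ∘ Equiv.swap u v) v ≤ (m ∘ Equiv.swap u v) u := by simpa using h.le
    rw [ddMono_of_lt h, mul_neg, Z_sub_Z_mul_ddMono_of_le huv h', neg_sub,
      comp_swap_comp_swap]

end DividedDifference

section SwapVariables

variable (u v : Fin N)

def swapExponents : (Fin N → ℤ) →+ (Fin N → ℤ) where
  toFun m := m ∘ Equiv.swap u v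
  map_zero' := rfl
  map_add' _ _ := rfl

variable (K) in
def swapRingHom : Lp K N →+* Lp K N := mapDomainRingHom K (swapExponents u v)

lemma swapRingHom_single (m : Fin N → ℤ) (c : K) :
    swapRingHom K u v (single m c) = single (m ∘ Equiv.swap u v) c :=
  mapDomain_single

lemma swapRingHom_swapRingHom (f : Lp K N) : swapRingHom K u v (swapRingHom K u v f) = f := by
  induction f using induction_linear with
  | zero => simp
  | add f g hf hg => simp [hf, hg]
  | single m c => rw [swapRingHom_single, swapRingHom_single, comp_swap_comp_swap]

lemma swapRingHom_CC (c : K) : swapRingHom K u v (CC c) = CC c :=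
  swapRingHom_single u v 0 c

variable {u v}

lemma swapRingHom_Z_left : swapRingHom K u v (Z u) = Z v := by
  rw [Z, swapRingHom_single, single_comp_swap, Z]

lemma swapRingHom_Z_right : swapRingHom K u v (Z v) = Z u := by
  rw [Z, swapRingHom_single, Equiv.swap_comm, single_comp_swap, Z]

end SwapVariables

section Hecke

variable {u v : Fin N}

lemma Z_sub_Z_mul_ddPair (huv : u ≠ v) (f : Lp K N) :
    (Z u - Z v) * ddPair u v f = f - swapRingHom K u v f := by
  conv_rhs => rw [← sum_coeff_single f]
  rw [ddPair, Finsupp.mul_sum, map_finsuppSum, ← Finsupp.sum_sub]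
  refine Finsupp.sum_congr fun m _ => ?_
  rw [mul_left_comm, Z_sub_Z_mul_ddMono huv, CC, mul_sub, single_mul_single,
    single_mul_single, zero_add, zero_add, mul_one, swapRingHom_single]

lemma Z_sub_Z_ne_zero (huv : u ≠ v) : (Z u - Z v : Lp K N) ≠ 0 := by
  rw [sub_ne_zero, Z, Z, Ne, single_left_inj one_ne_zero]
  intro h
  simpa [huv] using congrFun h u

lemma ddPair_eq_zero_of_swapRingHom_eq (huv : u ≠ v) {f : Lp K N}
    (hf : swapRingHom K u v f = f) : ddPair u v f = 0 :=
  (mul_eq_zero.mp ((Z_sub_Z_mul_ddPair huv f).trans (sub_eq_zero.mpr hf.symm))).resolve_left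
    (Z_sub_Z_ne_zero huv)

lemma swapRingHom_ddPair (huv : u ≠ v) (f : Lp K N) :
    swapRingHom K u v (ddPair u v f) = ddPair u v f := by
  have h := Z_sub_Z_mul_ddPair huv f
  have hs := congrArg (swapRingHom K u v) h
  rw [map_mul, map_sub, map_sub, swapRingHom_swapRingHom, swapRingHom_Z_left,
    swapRingHom_Z_right] at hs
  refine mul_left_cancel₀ (Z_sub_Z_ne_zero huv) ?_
  linear_combination -hs - h

theorem Tmid_hecke (t : K) (huv : u ≠ v) (f : Lp K N) :
    Tmid t u v (Tmid t u v f + f) - CC t * (Tmid t u v f + f) = 0 := by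
  have hsymm : swapRingHom K u v (Tmid t u v f + f) = Tmid t u v f + f := by
    simp only [Tmid, map_add, map_sub, map_mul, swapRingHom_CC, swapRingHom_Z_left,
      swapRingHom_Z_right, swapRingHom_ddPair huv]
    linear_combination (CC t + 1) * Z_sub_Z_mul_ddPair huv f
  rw [Tmid, ddPair_eq_zero_of_swapRingHom_eq huv hsymm]
  ring

end Hecke

/-- For `1 ≤ i ≤ N-1`, the Noumi operator `T̃_i` satisfies the quadratic
Hecke relation `(T̃_i - t·id) ∘ (T̃_i + id) = 0` on the ring of Laurent polynomials
`L = K[z_1^{±1}, …, z_N^{±1}]` over `K = ℚ(a,b,c,d,q,t)`. -/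
theorem statement0 (N : ℕ) (i : ℕ) (h1 : 1 ≤ i) (h2 : i ≤ N - 1)
    (f : Lp K6 N) :
    Tmid pT ⟨i - 1, by omega⟩ ⟨i, by omega⟩
        (Tmid pT ⟨i - 1, by omega⟩ ⟨i, by omega⟩ f + f) -
      CC pT * (Tmid pT ⟨i - 1, by omega⟩ ⟨i, by omega⟩ f + f) = 0 :=
  Tmid_hecke pT (Fin.ne_of_val_ne (by simp only; omega)) f

end RST
end
end

section
/- The Noumi operator T̃_N satisfies the quadratic Hecke relation (T̃_N − t_N·id)∘(T̃_N + id) = 0 on the ring L of Laurent polynomials, where t_N = −bd. -/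
open scoped BigOperators
open Finset

noncomputable section

namespace RST

/-! The reflection `s_N : z_v ↦ z_v⁻¹` is an algebra automorphism of `L`, and the divided
difference `∂ = (1 - s_N)/(z_v - z_v⁻¹)` satisfies `(z_v - z_v⁻¹) ∂f = f - s_N f`. As `L` is a
domain, `∂f` is `s_N`-invariant and `∂` vanishes on `s_N`-invariant elements, on which
`T̃_N = -bd + (bd z_v - (b+d) + z_v⁻¹) ∂` therefore acts as `-bd`. Applying `s_N` to
`(T̃_N + 1) f = (1 - bd) f + (bd z_v - (b+d) + z_v⁻¹) ∂f` and using `s_N f = f - (z_v - z_v⁻¹) ∂f`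
shows that `(T̃_N + 1) f` is `s_N`-invariant, which is the Hecke relation. -/

variable {K : Type*} [Field K] {N : ℕ}

def negExpAt (v : Fin N) : (Fin N → ℤ) ≃+ (Fin N → ℤ) where
  toFun m := Function.update m v (-(m v))
  invFun m := Function.update m v (-(m v))
  left_inv m := by simp
  right_inv m := by simp
  map_add' a b := by
    simp only [Pi.add_apply, neg_add, Function.update_add]

lemma negExpAt_apply (v : Fin N) (m : Fin N → ℤ) :
    negExpAt v m = Function.update m v (-(m v)) := rfl

lemma negExpAt_single (v : Fin N) (a : ℤ) : negExpAt v (Pi.single v a) = Pi.single v (-a) := by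
  simp [negExpAt_apply, Pi.single]

/-- The reflection `s_N : z_v ↦ z_v⁻¹` of `L`. -/
def invertVar (v : Fin N) : Lp K N ≃ₐ[K] Lp K N :=
  AddMonoidAlgebra.domCongr K K (negExpAt v)

lemma invertVar_single (v : Fin N) (m : Fin N → ℤ) (c : K) :
    invertVar v (AddMonoidAlgebra.single m c) =
      AddMonoidAlgebra.single (Function.update m v (-(m v))) c :=
  AddMonoidAlgebra.domCongr_single _ _ _

lemma invertVar_invertVar (v : Fin N) (f : Lp K N) : invertVar v (invertVar v f) = f := by
  have hinv : (negExpAt v).trans (negExpAt v) = AddEquiv.refl _ := by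
    ext m : 1
    exact (negExpAt v).left_inv m
  rw [← AlgEquiv.trans_apply, invertVar, AddMonoidAlgebra.trans_domCongr_domCongr, hinv,
    AddMonoidAlgebra.domCongr_refl]
  rfl

lemma invertVar_CC (v : Fin N) (c : K) : invertVar v (CC c : Lp K N) = CC c := by
  rw [CC, invertVar, AddMonoidAlgebra.domCongr_single, map_zero]

lemma invertVar_Z (v : Fin N) : invertVar v (Z v : Lp K N) = Zinv v := by
  rw [Z, invertVar, AddMonoidAlgebra.domCongr_single, negExpAt_single, Zinv]

lemma invertVar_Zinv (v : Fin N) : invertVar v (Zinv v : Lp K N) = Z v := by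
  rw [Zinv, invertVar, AddMonoidAlgebra.domCongr_single, negExpAt_single, neg_neg, Z]

lemma Z_sub_Zinv_ne_zero (v : Fin N) : (Z v - Zinv v : Lp K N) ≠ 0 := by
  intro h
  have hcoeff := congrArg (fun g : Lp K N => g.coeff (Pi.single v 1)) h
  simp [Z, Zinv, AddMonoidAlgebra.coeff_single] at hcoeff

lemma Z_sub_Zinv_mul_single_update (v : Fin N) (m : Fin N → ℤ) (e : ℤ) :
    (Z v - Zinv v) * AddMonoidAlgebra.single (Function.update m v e) (1 : K) =
      AddMonoidAlgebra.single (Function.update m v (e + 1)) 1 -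
        AddMonoidAlgebra.single (Function.update m v (e - 1)) 1 := by
  have hshift (a : ℤ) : Pi.single v a + Function.update m v e = Function.update m v (e + a) := by
    rw [Pi.single, ← Function.update_add, zero_add, add_comm a]
  rw [sub_mul, Z, Zinv, AddMonoidAlgebra.single_mul_single, AddMonoidAlgebra.single_mul_single,
    one_mul, hshift, hshift, ← sub_eq_add_neg]

lemma Z_sub_Zinv_mul_dd0Mono_one (v : Fin N) (m : Fin N → ℤ) :
    (Z v - Zinv v) * dd0Mono 1 v m =
      AddMonoidAlgebra.single m (1 : K) -
        AddMonoidAlgebra.single (Function.update m v (-(m v))) 1 := by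
  set e : ℤ → Lp K N := fun n => AddMonoidAlgebra.single (Function.update m v n) 1
  have hstep (n : ℤ) : (Z v - Zinv v) * e n = e (n + 1) - e (n - 1) :=
    Z_sub_Zinv_mul_single_update v m n
  rw [show AddMonoidAlgebra.single m (1 : K) = e (m v) by simp [e]]
  rcases le_or_gt 0 (m v) with h | h
  · obtain ⟨n, hn⟩ := Int.eq_ofNat_of_zero_le h
    rw [dd0Mono, if_pos h, hn, Int.toNat_natCast, Finset.mul_sum]
    simp only [one_pow]
    calc ∑ k ∈ range n, (Z v - Zinv v) * e (n - 1 - 2 * k)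
        = ∑ k ∈ range n, (e (n - 2 * k) - e (n - 2 * (k + 1 : ℕ))) := by
          refine sum_congr rfl fun k _ => ?_
          rw [hstep]
          push_cast
          ring_nf
      _ = e n - e (-n) := by rw [sum_range_sub']; push_cast; ring_nf
  · obtain ⟨n, hn⟩ := Int.exists_eq_neg_ofNat h.le
    rw [dd0Mono, if_neg h.not_ge, hn, neg_neg, Int.toNat_natCast, mul_neg, Finset.mul_sum]
    simp only [one_zpow]
    calc -∑ k ∈ range n, (Z v - Zinv v) * e (-n + 1 + 2 * k)
        = -∑ k ∈ range n, (e (-n + 2 * (k + 1 : ℕ)) - e (-n + 2 * k)) := by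
          congr 1
          refine sum_congr rfl fun k _ => ?_
          rw [hstep]
          push_cast
          ring_nf
      _ = e (-n) - e n := by rw [sum_range_sub fun k : ℕ => e (-n + 2 * k)]; push_cast; ring_nf

lemma Z_sub_Zinv_mul_dd0_one (v : Fin N) (f : Lp K N) :
    (Z v - Zinv v) * dd0 1 v f = f - invertVar v f := by
  conv_rhs => rw [← AddMonoidAlgebra.sum_coeff_single f, map_finsuppSum, ← Finsupp.sum_sub]
  rw [dd0, Finsupp.mul_sum]
  refine Finsupp.sum_congr fun m _ => ?_
  rw [mul_left_comm, Z_sub_Zinv_mul_dd0Mono_one, mul_sub, CC, AddMonoidAlgebra.single_mul_single,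
    AddMonoidAlgebra.single_mul_single, zero_add, zero_add, mul_one, invertVar_single]

lemma invertVar_dd0_one (v : Fin N) (f : Lp K N) : invertVar v (dd0 1 v f) = dd0 1 v f := by
  have h := congrArg (invertVar v) (Z_sub_Zinv_mul_dd0_one v f)
  rw [map_mul, map_sub, map_sub, invertVar_Z, invertVar_Zinv, invertVar_invertVar] at h
  refine mul_left_cancel₀ (Z_sub_Zinv_ne_zero v) ?_
  linear_combination -h - Z_sub_Zinv_mul_dd0_one v f

lemma dd0_one_eq_zero_of_invertVar_eq {v : Fin N} {g : Lp K N} (hg : invertVar v g = g) :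
    dd0 1 v g = 0 := by
  have h := Z_sub_Zinv_mul_dd0_one v g
  rw [hg, sub_self] at h
  exact (mul_eq_zero_iff_left (Z_sub_Zinv_ne_zero v)).mp h

lemma TN_of_invertVar_eq (b d : K) {v : Fin N} {g : Lp K N} (hg : invertVar v g = g) :
    TN b d v g = CC (-(b * d)) * g := by
  rw [TN, dd0_one_eq_zero_of_invertVar_eq hg, mul_zero, add_zero]

lemma invertVar_TN_add_self (b d : K) (v : Fin N) (f : Lp K N) :
    invertVar v (TN b d v f + f) = TN b d v f + f := by
  have hneg : (CC (-(b * d)) : Lp K N) = -CC (b * d) := AddMonoidAlgebra.single_neg 0 (b * d)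
  rw [TN, map_add, map_add, map_mul, map_mul, map_add, map_sub, map_mul, invertVar_CC,
    invertVar_CC, invertVar_CC, invertVar_Z, invertVar_Zinv, invertVar_dd0_one]
  linear_combination (CC (-(b * d)) + 1) * Z_sub_Zinv_mul_dd0_one v f -
    (Z v - Zinv v) * dd0 1 v f * hneg

theorem TN_hecke (b d : K) (v : Fin N) (f : Lp K N) :
    TN b d v (TN b d v f + f) - CC (-(b * d)) * (TN b d v f + f) = 0 := by
  rw [TN_of_invertVar_eq b d (invertVar_TN_add_self b d v f), sub_self]

/-- The Noumi operator `T̃_N` satisfies the quadratic Hecke relation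
`(T̃_N - t_N·id) ∘ (T̃_N + id) = 0` on Laurent polynomials, where `t_N = -bd`. -/
theorem statement2 (N : ℕ) (hN : 1 ≤ N) (f : Lp K6 N) :
    TN pB pD ⟨N - 1, by omega⟩ (TN pB pD ⟨N - 1, by omega⟩ f + f) -
      CC (-(pB * pD)) * (TN pB pD ⟨N - 1, by omega⟩ f + f) = 0 :=
  TN_hecke pB pD _ f

end RST
end
end

section
/- Let x be a word in {∘, ∗, ●} = {−1, 0, 1} of length N−1. Then q·T̃_0(F_{∘x}(z; t)) = F_{●x}(z; t), where ∘x and ●x denote the length-N words with first entry −1 (resp. 1) followed by x. -/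
open scoped BigOperators
open Finset

noncomputable section

/-!
Split the sum defining `F_μ` according to whether the first position lies in `S`:
`F_{s x} = ∑_S (R̃(s x_S) + R̃(x_S) (z₁^s - 1)) P_S`, where `x_S` is `x` with the positions of `S`
deleted and `P_S = ∏_{i ∈ S} (z_i^{x_i} - 1)` does not involve `z₁`. On such functions `q T̃₀`
acts as multiplication by `-ac`, and it sends `z₁⁻¹ g` to `(z₁ - a - c) g`; so the identity
reduces, summand by summand, to `R̃(●u) = (a-1)(c-1) R̃(u) - ac R̃(∘u)`. After the change of
variables this is the recursion `γ R(●u) - α R(∘u) = (γδ - αβ t^{|u|+r(u)}) R(u)`, obtained by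
sorting tableaux by the letter in their top-left tile. A `δ` or `β` there empties the rest of the
first row and leaves a tableau of type `u` (the empty first-row tiles contribute `t^{|u|+r(u)}`
when the corner is `β`), while replacing the `α` in that corner of a tableau of type `●u` by `γ`
is a bijection onto the tableaux of type `∘u` with `γ` there, multiplying the weight by `γ/α`.
-/

namespace RST

section Tableaux

variable {s s₁ s₂ : ℤ} {w : List ℤ} {g₁ g₂ : Greek}

instance (s : ℤ) (w : List ℤ) : NeZero (s::w).length := ⟨Nat.succ_ne_zero _⟩

@[simp] lemma cons_get_succ (i : Fin w.length) : (s::w).get i.succ = w.get i := rfl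

lemma cons_get_eq_zero_iff (hs₁ : s₁ ≠ 0) (hs₂ : s₂ ≠ 0) (k : Fin (s₁::w).length) :
    (s₁::w).get k = 0 ↔ (s₂::w).get k = 0 := by
  cases k using Fin.cases
  · exact iff_of_false hs₁ hs₂
  · rfl

lemma isTile_succ_succ {i j : Fin w.length} : IsTile (s::w) i.succ j.succ ↔ IsTile w i j :=
  and_congr Fin.succ_le_succ_iff Iff.rfl

lemma isTile_zero_left (hs : s ≠ 0) (j : Fin (s::w).length) : IsTile (s::w) 0 j :=
  ⟨Fin.zero_le _, fun h => hs h.1⟩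

lemma not_isTile_succ_zero (i : Fin w.length) : ¬ IsTile (s::w) i.succ 0 :=
  fun h => Fin.succ_ne_zero i (Fin.le_zero_iff.mp h.1)

lemma colAbove_succ_succ {i j : Fin w.length} :
    ColAbove (s::w) i.succ j.succ ↔ ColAbove w i j := by
  simp only [ColAbove, cons_get_succ, Fin.succ_lt_succ_iff]

lemma not_colAbove_zero_zero (hs : s ≠ 0) : ¬ ColAbove (s::w) 0 0 := by
  simp [ColAbove, hs]

lemma isTile_cons_congr (hs₁ : s₁ ≠ 0) (hs₂ : s₂ ≠ 0) :
    IsTile (s₁::w) = IsTile (s₂::w) := by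
  ext i j
  simp only [IsTile, cons_get_eq_zero_iff hs₁ hs₂]

lemma colAbove_cons_congr (hs₁ : s₁ ≠ 0) (hs₂ : s₂ ≠ 0) :
    ColAbove (s₁::w) = ColAbove (s₂::w) := by
  ext i j
  simp only [ColAbove, ne_eq, cons_get_eq_zero_iff hs₁ hs₂]

lemma seesBelow_cons_congr (hs₁ : s₁ ≠ 0) (hs₂ : s₂ ≠ 0) :
    SeesBelow (s₁::w) = SeesBelow (s₂::w) := by
  ext f i j g
  rw [SeesBelow, SeesBelow, isTile_cons_congr hs₁ hs₂, colAbove_cons_congr hs₁ hs₂]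
  rfl

def tailFilling (f : Filling (s::w)) : Filling w := fun i j => f i.succ j.succ

lemma seesRight_succ_succ (f : Filling (s::w)) (i j : Fin w.length) (g : Greek) :
    SeesRight (s::w) f i.succ j.succ g ↔ SeesRight w (tailFilling f) i j g := by
  constructor
  · rintro ⟨j', hij', hj'j, hf, hnone⟩
    cases j' using Fin.cases with
    | zero => exact absurd (Fin.le_zero_iff.mp hij') (Fin.succ_ne_zero i)
    | succ k =>
      exact ⟨k, Fin.succ_le_succ_iff.mp hij', Fin.succ_lt_succ_iff.mp hj'j, hf, fun m h₁ h₂ =>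
        hnone m.succ (Fin.succ_lt_succ_iff.mpr h₁) (Fin.succ_lt_succ_iff.mpr h₂)⟩
  · rintro ⟨k, hik, hkj, hf, hnone⟩
    refine ⟨k.succ, Fin.succ_le_succ_iff.mpr hik, Fin.succ_lt_succ_iff.mpr hkj, hf, ?_⟩
    intro m h₁ h₂
    cases m using Fin.cases with
    | zero => exact absurd h₁ (Fin.not_lt_zero _)
    | succ m => exact hnone m (Fin.succ_lt_succ_iff.mp h₁) (Fin.succ_lt_succ_iff.mp h₂)

lemma seesBelow_succ_succ (f : Filling (s::w)) {i j : Fin w.length}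
    (htop : f 0 j.succ = none) (g : Greek) :
    SeesBelow (s::w) f i.succ j.succ g ↔ SeesBelow w (tailFilling f) i j g := by
  constructor
  · rintro ⟨i', ht, ha, hf, hnone⟩
    cases i' using Fin.cases with
    | zero => simp [htop] at hf
    | succ k =>
      exact ⟨k, isTile_succ_succ.mp ht, colAbove_succ_succ.mp ha, hf, fun m h₁ h₂ h₃ =>
        hnone m.succ (isTile_succ_succ.mpr h₁) (colAbove_succ_succ.mpr h₂)
          (colAbove_succ_succ.mpr h₃)⟩
  · rintro ⟨k, ht, ha, hf, hnone⟩
    refine ⟨k.succ, isTile_succ_succ.mpr ht, colAbove_succ_succ.mpr ha, hf, ?_⟩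
    intro m h₁ h₂ h₃
    cases m using Fin.cases with
    | zero => exact htop
    | succ m =>
      exact hnone m (isTile_succ_succ.mp h₁) (colAbove_succ_succ.mp h₂)
        (colAbove_succ_succ.mp h₃)

lemma seesRight_zero_succ (f : Filling (s::w)) {g₀ : Greek} (hcorner : f 0 0 = some g₀)
    (hrow : ∀ k : Fin w.length, f 0 k.succ = none) (j : Fin w.length) (g : Greek) :
    SeesRight (s::w) f 0 j.succ g ↔ g = g₀ := by
  constructor
  · rintro ⟨j', -, -, hf, -⟩
    cases j' using Fin.cases with
    | zero => exact (Option.some_inj.mp (hcorner ▸ hf)).symm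
    | succ k => simp [hrow k] at hf
  · rintro rfl
    refine ⟨0, le_rfl, Fin.succ_pos _, hcorner, fun m h₁ _ => ?_⟩
    cases m using Fin.cases with
    | zero => exact absurd h₁ (lt_irrefl _)
    | succ m => exact hrow m

lemma card_filter_get_eq_zero (w : List ℤ) : #{j : Fin w.length | w.get j = 0} = nzeros w :=
  Fin.card_filter_univ_eq_vector_get_eq_count 0 ⟨w, rfl⟩

variable {R : Type*} [CommRing R] (pa pb pg pd pt : R)

lemma prod_ite_get_eq_zero (w : List ℤ) :
    (∏ j : Fin w.length, if w.get j = 0 then pt ^ 2 else pt) = pt ^ (w.length + nzeros w) := by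
  have h (j : Fin w.length) :
      (if w.get j = 0 then pt ^ 2 else pt) = pt * if w.get j = 0 then pt else 1 := by
    split_ifs <;> ring
  rw [prod_congr rfl fun j _ => h j, prod_mul_distrib, prod_ite, prod_const_one, mul_one,
    prod_const, prod_const, card_univ, Fintype.card_fin, card_filter_get_eq_zero, pow_add]

lemma tileWt_of_not_isTile {f : Filling w} {i j : Fin w.length} (h : ¬ IsTile w i j) :
    tileWt pa pb pg pd pt w f i j = 1 :=
  if_pos h

lemma tileWt_cons_congr (hs₁ : s₁ ≠ 0) (hs₂ : s₂ ≠ 0) :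
    tileWt pa pb pg pd pt (s₁::w) = tileWt pa pb pg pd pt (s₂::w) := by
  ext f i j
  unfold tileWt
  rw [isTile_cons_congr hs₁ hs₂, seesBelow_cons_congr hs₁ hs₂]
  simp only [ne_eq, cons_get_eq_zero_iff hs₁ hs₂ i, cons_get_eq_zero_iff hs₁ hs₂ j]
  rfl

lemma tileWt_succ_succ (f : Filling (s::w)) (hrow : ∀ k : Fin w.length, f 0 k.succ = none)
    (i j : Fin w.length) :
    tileWt pa pb pg pd pt (s::w) f i.succ j.succ = tileWt pa pb pg pd pt w (tailFilling f) i j := by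
  classical
  simp only [tileWt, isTile_succ_succ, cons_get_succ, seesRight_succ_succ,
    seesBelow_succ_succ f (hrow j)]
  rfl

def letterWt : Greek → R
  | Greek.A => pa
  | Greek.B => pb
  | Greek.G => pg
  | Greek.D => pd

lemma tileWt_zero_zero (hs : s ≠ 0) (f : Filling (s::w)) {g : Greek} (h : f 0 0 = some g) :
    tileWt pa pb pg pd pt (s::w) f 0 0 = letterWt pa pb pg pd g := by
  cases g <;> simp [tileWt, isTile_zero_left hs, h, hs, letterWt]

lemma tileWt_zero_succ_of_D (hs : s ≠ 0) (f : Filling (s::w)) (hcorner : f 0 0 = some Greek.D)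
    (hrow : ∀ k : Fin w.length, f 0 k.succ = none) (j : Fin w.length) :
    tileWt pa pb pg pd pt (s::w) f 0 j.succ = 1 := by
  simp [tileWt, isTile_zero_left hs, hrow j, seesRight_zero_succ f hcorner hrow, hs]

lemma tileWt_zero_succ_of_B (hs : s ≠ 0) (f : Filling (s::w)) (hcorner : f 0 0 = some Greek.B)
    (hrow : ∀ k : Fin w.length, f 0 k.succ = none) (j : Fin w.length) :
    tileWt pa pb pg pd pt (s::w) f 0 j.succ = if w.get j = 0 then pt ^ 2 else pt := by
  simp [tileWt, isTile_zero_left hs, hrow j, seesRight_zero_succ f hcorner hrow, hs]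

lemma wt_cons (f : Filling (s::w)) :
    wt pa pb pg pd pt (s::w) f = tileWt pa pb pg pd pt (s::w) f 0 0 *
      ((∏ j : Fin w.length, tileWt pa pb pg pd pt (s::w) f 0 j.succ) *
        ∏ i : Fin w.length, ∏ j : Fin (s::w).length,
          tileWt pa pb pg pd pt (s::w) f i.succ j) := by
  refine (Fin.prod_univ_succ (n := w.length) _).trans ?_
  rw [← mul_assoc]
  exact congrArg (· * _) (Fin.prod_univ_succ (n := w.length) _)

lemma prod_tileWt_succ (f : Filling (s::w)) (hrow : ∀ k : Fin w.length, f 0 k.succ = none) :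
    (∏ i : Fin w.length, ∏ j : Fin (s::w).length, tileWt pa pb pg pd pt (s::w) f i.succ j) =
      wt pa pb pg pd pt w (tailFilling f) := by
  refine prod_congr rfl fun i _ => ?_
  refine (Fin.prod_univ_succ (n := w.length) _).trans ?_
  rw [tileWt_of_not_isTile pa pb pg pd pt (not_isTile_succ_zero i), one_mul]
  exact prod_congr rfl fun j _ => tileWt_succ_succ pa pb pg pd pt f hrow i j

def consFilling (o : Option Greek) (g : Filling w) : Filling (s::w) :=
  Fin.cases (Fin.cases o fun _ => none) fun i => Fin.cases none fun j => g i j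

@[simp] lemma consFilling_zero_zero (o : Option Greek) (g : Filling w) :
    consFilling (s := s) o g 0 0 = o := rfl

@[simp] lemma consFilling_zero_succ (o : Option Greek) (g : Filling w) (j : Fin w.length) :
    consFilling (s := s) o g 0 j.succ = none := rfl

@[simp] lemma consFilling_succ_zero (o : Option Greek) (g : Filling w) (i : Fin w.length) :
    consFilling (s := s) o g i.succ 0 = none := rfl

@[simp] lemma consFilling_succ_succ (o : Option Greek) (g : Filling w) (i j : Fin w.length) :
    consFilling (s := s) o g i.succ j.succ = g i j := rfl

lemma isRST_tailFilling {f : Filling (s::w)} (hf : IsRST (s::w) f) : IsRST w (tailFilling f) := by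
  obtain ⟨c1, c2, c3, c4, c5, c6, c7⟩ := hf
  exact ⟨fun i j h => c1 i.succ j.succ (mt isTile_succ_succ.mp h),
    fun j => c2 j.succ, fun j => c3 j.succ, fun i j => c4 i.succ j.succ,
    fun i j => c5 i.succ j.succ,
    fun i j i' hAG ht ha => c6 i.succ j.succ i'.succ hAG (isTile_succ_succ.mpr ht)
      (colAbove_succ_succ.mpr ha),
    fun i j j' hBD hlt ht => c7 i.succ j.succ j'.succ hBD (Fin.succ_lt_succ_iff.mpr hlt)
      (isTile_succ_succ.mpr ht)⟩

lemma IsRST.apply_zero_succ_eq_none {f : Filling (s::w)} (hf : IsRST (s::w) f) (hs : s ≠ 0)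
    (hcorner : f 0 0 = some Greek.B ∨ f 0 0 = some Greek.D) (k : Fin w.length) :
    f 0 k.succ = none :=
  hf.2.2.2.2.2.2 0 0 k.succ hcorner (Fin.succ_pos k) (isTile_zero_left hs k.succ)

lemma IsRST.eq_consFilling {f : Filling (s::w)} (hf : IsRST (s::w) f) (hs : s ≠ 0)
    (hcorner : f 0 0 = some Greek.B ∨ f 0 0 = some Greek.D) :
    f = consFilling (f 0 0) (tailFilling f) := by
  funext i j
  cases i using Fin.cases <;> cases j using Fin.cases
  · rfl
  · exact hf.apply_zero_succ_eq_none hs hcorner _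
  · exact hf.1 _ 0 (not_isTile_succ_zero _)
  · rfl

lemma isRST_consFilling (hs : s ≠ 0) {o : Option Greek}
    (hBD : o = some Greek.B ∨ o = some Greek.D)
    (hneg : s = -1 → o = some Greek.B ∨ o = some Greek.G)
    (hpos : s = 1 → o = some Greek.A ∨ o = some Greek.D)
    {g : Filling w} (hg : IsRST w g) : IsRST (s::w) (consFilling o g) := by
  obtain ⟨c1, c2, c3, c4, c5, c6, c7⟩ := hg
  refine ⟨fun i j h => ?_, fun j h => ?_, fun j h => ?_, fun i j h => ?_, fun i j h => ?_,
    fun i j i' h ht ha => ?_, fun i j j' h hlt ht => ?_⟩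
  · cases i using Fin.cases <;> cases j using Fin.cases
    · exact absurd (isTile_zero_left hs 0) h
    · rfl
    · rfl
    · exact c1 _ _ (mt isTile_succ_succ.mpr h)
  · cases j using Fin.cases
    · exact hneg h
    · exact c2 _ h
  · cases j using Fin.cases
    · exact hpos h
    · exact c3 _ h
  · cases j using Fin.cases
    · exact absurd h hs
    · cases i using Fin.cases
      · exact Or.inl rfl
      · exact c4 _ _ h
  · cases i using Fin.cases
    · exact absurd h hs
    · cases j using Fin.cases
      · exact Or.inl rfl
      · exact c5 _ _ h
  · cases i using Fin.cases <;> cases j using Fin.cases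
    · rcases hBD with rfl | rfl <;> simp at h
    · simp at h
    · simp at h
    · cases i' using Fin.cases
      · rfl
      · exact c6 _ _ _ h (isTile_succ_succ.mp ht) (colAbove_succ_succ.mp ha)
  · cases i using Fin.cases <;> cases j' using Fin.cases
    · exact absurd hlt (Fin.not_lt_zero _)
    · rfl
    · exact absurd hlt (Fin.not_lt_zero _)
    · cases j using Fin.cases
      · simp at h
      · exact c7 _ _ _ h (Fin.succ_lt_succ_iff.mp hlt) (isTile_succ_succ.mp ht)

lemma IsRST.wt_of_corner_D {f : Filling (s::w)} (hf : IsRST (s::w) f) (hs : s ≠ 0)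
    (hcorner : f 0 0 = some Greek.D) :
    wt pa pb pg pd pt (s::w) f = pd * wt pa pb pg pd pt w (tailFilling f) := by
  have hrow := hf.apply_zero_succ_eq_none hs (Or.inr hcorner)
  rw [wt_cons, tileWt_zero_zero pa pb pg pd pt hs f hcorner,
    prod_congr rfl fun j _ => tileWt_zero_succ_of_D pa pb pg pd pt hs f hcorner hrow j,
    prod_const_one, one_mul, prod_tileWt_succ pa pb pg pd pt f hrow]
  rfl

lemma IsRST.wt_of_corner_B {f : Filling (s::w)} (hf : IsRST (s::w) f) (hs : s ≠ 0)
    (hcorner : f 0 0 = some Greek.B) :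
    wt pa pb pg pd pt (s::w) f =
      pb * pt ^ (w.length + nzeros w) * wt pa pb pg pd pt w (tailFilling f) := by
  have hrow := hf.apply_zero_succ_eq_none hs (Or.inl hcorner)
  rw [wt_cons, tileWt_zero_zero pa pb pg pd pt hs f hcorner,
    prod_congr rfl fun j _ => tileWt_zero_succ_of_B pa pb pg pd pt hs f hcorner hrow j,
    prod_ite_get_eq_zero, prod_tileWt_succ pa pb pg pd pt f hrow, mul_assoc]
  rfl

def setCorner (g : Greek) (f : Filling (s₁::w)) : Filling (s₂::w) :=
  fun i j => if i = 0 ∧ j = 0 then some g else f i j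

@[simp] lemma setCorner_zero_zero (g : Greek) (f : Filling (s₁::w)) :
    setCorner (s₂ := s₂) g f 0 0 = some g :=
  if_pos ⟨rfl, rfl⟩

lemma setCorner_of_ne (g : Greek) (f : Filling (s₁::w)) {i j : Fin (s₁::w).length}
    (h : ¬(i = 0 ∧ j = 0)) : setCorner (s₂ := s₂) g f i j = f i j :=
  if_neg h

@[simp] lemma setCorner_succ_left (g : Greek) (f : Filling (s₁::w)) (i : Fin w.length)
    (j : Fin (s₁::w).length) : setCorner (s₂ := s₂) g f i.succ j = f i.succ j :=
  setCorner_of_ne g f fun h => Fin.succ_ne_zero i h.1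

@[simp] lemma setCorner_succ_right (g : Greek) (f : Filling (s₁::w)) (i : Fin (s₁::w).length)
    (j : Fin w.length) : setCorner (s₂ := s₂) g f i j.succ = f i j.succ :=
  setCorner_of_ne g f fun h => Fin.succ_ne_zero j h.2

lemma setCorner_setCorner (g g' : Greek) (f : Filling (s₁::w)) (h : f 0 0 = some g') :
    setCorner g' (setCorner (s₂ := s₂) g f) = f := by
  funext i j
  unfold setCorner
  split_ifs with hij
  · rw [hij.1, hij.2, h]
  · rfl

lemma seesRight_or_congr_of_row {f f' : Filling w} {i : Fin w.length}
    (hnone : ∀ k, f i k = none ↔ f' i k = none)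
    (hg : ∀ k, (f i k = some g₁ ∨ f i k = some g₂) ↔
      (f' i k = some g₁ ∨ f' i k = some g₂))
    (j : Fin w.length) :
    (SeesRight w f i j g₁ ∨ SeesRight w f i j g₂) ↔
      (SeesRight w f' i j g₁ ∨ SeesRight w f' i j g₂) := by
  simp only [SeesRight, hnone, ← exists_or]
  refine exists_congr fun k => ?_
  have := hg k
  tauto

lemma seesRight_congr_of_row {f f' : Filling w} {i : Fin w.length} {g : Greek}
    (hnone : ∀ k, f i k = none ↔ f' i k = none) (hg : ∀ k, f i k = some g ↔ f' i k = some g)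
    (j : Fin w.length) : SeesRight w f i j g ↔ SeesRight w f' i j g := by
  simpa using seesRight_or_congr_of_row (g₁ := g) (g₂ := g) hnone (by simpa using hg) j

lemma seesBelow_congr_of_col {f f' : Filling w} {j : Fin w.length} (hcol : ∀ k, f k j = f' k j)
    (i : Fin w.length) (g : Greek) : SeesBelow w f i j g ↔ SeesBelow w f' i j g := by
  simp only [SeesBelow, hcol]

lemma tileWt_setCorner (hs₁ : s₁ ≠ 0) (hs₂ : s₂ ≠ 0) {f : Filling (s₁::w)}
    (hg₁ : g₁ = Greek.A ∨ g₁ = Greek.G) (hg₂ : g₂ = Greek.A ∨ g₂ = Greek.G)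
    (hcorner : f 0 0 = some g₁) {i j : Fin (s₁::w).length} (hij : ¬(i = 0 ∧ j = 0)) :
    tileWt pa pb pg pd pt (s₂::w) (setCorner g₂ f) i j =
      tileWt pa pb pg pd pt (s₁::w) f i j := by
  rw [← tileWt_cons_congr pa pb pg pd pt hs₁ hs₂]
  by_cases ht : IsTile (s₁::w) i j
  swap
  · rw [tileWt_of_not_isTile _ _ _ _ _ ht, tileWt_of_not_isTile _ _ _ _ _ ht]
  obtain ⟨j, rfl⟩ : ∃ j' : Fin w.length, j = j'.succ := by
    cases j using Fin.cases
    · exact absurd ⟨Fin.le_zero_iff.mp ht.1, rfl⟩ hij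
    · exact ⟨_, rfl⟩
  have hcol (k : Fin (s₁::w).length) : setCorner (s₂ := s₂) g₂ f k j.succ = f k j.succ :=
    setCorner_succ_right g₂ f k j
  -- A tile of the first row only sees whether the corner holds `α` or `γ`, not which one.
  have hrow (P : Option Greek → Prop) (hP : P (some g₂) ↔ P (some g₁))
      (k : Fin (s₁::w).length) : P (setCorner (s₂ := s₂) g₂ f i k) ↔ P (f i k) := by
    by_cases hik : i = 0 ∧ k = 0
    · rw [hik.1, hik.2, setCorner_zero_zero, hcorner, hP]
    · rw [setCorner_of_ne _ _ hik]
  have hAG := seesRight_or_congr_of_row (hrow (· = none) (by simp))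
    (hrow (fun o => o = some Greek.A ∨ o = some Greek.G) (by
      rcases hg₁ with rfl | rfl <;> rcases hg₂ with rfl | rfl <;> simp)) j.succ
  have hB := seesRight_congr_of_row (hrow (· = none) (by simp)) (hrow (· = some Greek.B) (by
      rcases hg₁ with rfl | rfl <;> rcases hg₂ with rfl | rfl <;> simp)) j.succ
  unfold tileWt
  rw [hcol]
  cases f i j.succ with
  | some g => cases g <;> rfl
  | none => classical simp only [hAG, hB, seesBelow_congr_of_col hcol i]

lemma wt_setCorner (hs₁ : s₁ ≠ 0) (hs₂ : s₂ ≠ 0) {f : Filling (s₁::w)}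
    (hg₁ : g₁ = Greek.A ∨ g₁ = Greek.G) (hg₂ : g₂ = Greek.A ∨ g₂ = Greek.G)
    (hcorner : f 0 0 = some g₁) :
    letterWt pa pb pg pd g₂ * wt pa pb pg pd pt (s₁::w) f =
      letterWt pa pb pg pd g₁ * wt pa pb pg pd pt (s₂::w) (setCorner g₂ f) := by
  rw [wt_cons, wt_cons, tileWt_zero_zero pa pb pg pd pt hs₁ f hcorner,
    tileWt_zero_zero pa pb pg pd pt hs₂ _ (setCorner_zero_zero g₂ f)]
  simp only [tileWt_setCorner pa pb pg pd pt hs₁ hs₂ hg₁ hg₂ hcorner (i := 0)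
      (j := Fin.succ _) fun h => Fin.succ_ne_zero _ h.2,
    tileWt_setCorner pa pb pg pd pt hs₁ hs₂ hg₁ hg₂ hcorner (i := Fin.succ _)
      fun h => Fin.succ_ne_zero _ h.1]
  exact mul_left_comm _ _ _

lemma isRST_setCorner (hs₁ : s₁ ≠ 0) (hs₂ : s₂ ≠ 0) {f : Filling (s₁::w)}
    (hf : IsRST (s₁::w) f) (hg₂ : g₂ = Greek.A ∨ g₂ = Greek.G)
    (hneg : s₂ = -1 → g₂ = Greek.B ∨ g₂ = Greek.G)
    (hpos : s₂ = 1 → g₂ = Greek.A ∨ g₂ = Greek.D) :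
    IsRST (s₂::w) (setCorner g₂ f) := by
  obtain ⟨c1, c2, c3, c4, c5, c6, c7⟩ := hf
  rw [isTile_cons_congr hs₁ hs₂] at c1 c6 c7
  rw [colAbove_cons_congr hs₁ hs₂] at c6
  refine ⟨fun i j h => ?_, fun j h => ?_, fun j h => ?_, fun i j h => ?_, fun i j h => ?_,
    fun i j i' h ht ha => ?_, fun i j j' h hlt ht => ?_⟩
  · have hij : ¬(i = 0 ∧ j = 0) := fun hij => h (hij.1 ▸ isTile_zero_left hs₂ j)
    exact (setCorner_of_ne g₂ f hij).trans (c1 i j h)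
  · cases j using Fin.cases
    · simpa using hneg h
    · exact c2 _ h
  · cases j using Fin.cases
    · simpa using hpos h
    · exact c3 _ h
  · cases j using Fin.cases with
    | zero => exact absurd h hs₂
    | succ j => simpa using c4 i j.succ h
  · cases i using Fin.cases with
    | zero => exact absurd h hs₂
    | succ i => simpa using c5 i.succ j h
  · cases j using Fin.cases with
    | zero =>
      obtain rfl : i' = 0 := Fin.le_zero_iff.mp ht.1
      cases i using Fin.cases
      · exact absurd ha (not_colAbove_zero_zero hs₂)
      · rw [setCorner_succ_left, c1 _ 0 (not_isTile_succ_zero _)] at h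
        simp at h
    | succ j =>
      rw [setCorner_succ_right] at h ⊢
      exact c6 i _ i' h ht ha
  · have hij : ¬(i = 0 ∧ j = 0) := by
      rintro ⟨rfl, rfl⟩
      rcases hg₂ with rfl | rfl <;> simp at h
    rw [setCorner_of_ne g₂ f hij] at h
    exact (setCorner_of_ne g₂ f fun h' => (Fin.not_lt_zero j) (h'.2 ▸ hlt)).trans
      (c7 i j j' h hlt ht)

open Classical in
lemma RR_eq_sum_corner (hcorner : ∀ f : Filling (s::w), IsRST (s::w) f →
      f 0 0 = some g₁ ∨ f 0 0 = some g₂) (hne : g₁ ≠ g₂) :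
    RR pa pb pg pd pt (s::w) =
      (∑ f with IsRST (s::w) f ∧ f 0 0 = some g₁, wt pa pb pg pd pt (s::w) f) +
        ∑ f with IsRST (s::w) f ∧ f 0 0 = some g₂, wt pa pb pg pd pt (s::w) f := by
  rw [RR, ← sum_filter_add_sum_filter_not _ (fun f => f 0 0 = some g₁), filter_filter,
    filter_filter]
  congr 2
  ext f
  simp only [mem_filter, mem_univ, true_and]
  constructor
  · rintro ⟨hf, hf₁⟩
    exact ⟨hf, (hcorner f hf).resolve_left hf₁⟩
  · rintro ⟨hf, hf₂⟩
    exact ⟨hf, fun hf₁ => hne (Option.some_inj.mp (hf₁.symm.trans hf₂))⟩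

open Classical in
lemma sum_wt_corner_BD (hs : s ≠ 0) {o : Option Greek}
    (hBD : o = some Greek.B ∨ o = some Greek.D)
    (hneg : s = -1 → o = some Greek.B ∨ o = some Greek.G)
    (hpos : s = 1 → o = some Greek.A ∨ o = some Greek.D) {c : R}
    (hwt : ∀ f : Filling (s::w), IsRST (s::w) f → f 0 0 = o →
      wt pa pb pg pd pt (s::w) f = c * wt pa pb pg pd pt w (tailFilling f)) :
    ∑ f with IsRST (s::w) f ∧ f 0 0 = o, wt pa pb pg pd pt (s::w) f =
      c * RR pa pb pg pd pt w := by
  rw [RR, mul_sum]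
  refine sum_bij' (fun f _ => tailFilling f) (fun g _ => consFilling o g) ?_ ?_ ?_ ?_ ?_
  · intro f hf
    simp only [mem_filter, mem_univ, true_and] at hf ⊢
    exact isRST_tailFilling hf.1
  · intro g hg
    simp only [mem_filter, mem_univ, true_and] at hg ⊢
    exact ⟨isRST_consFilling hs hBD hneg hpos hg, rfl⟩
  · intro f hf
    simp only [mem_filter, mem_univ, true_and] at hf
    rw [hf.1.eq_consFilling hs (hf.2 ▸ hBD), hf.2]
    rfl
  · intro g _
    rfl
  · intro f hf
    simp only [mem_filter, mem_univ, true_and] at hf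
    exact hwt f hf.1 hf.2

open Classical in
lemma sum_wt_corner_A_eq_sum_wt_corner_G :
    pg * ∑ f with IsRST ((1:ℤ)::w) f ∧ f 0 0 = some Greek.A,
        wt pa pb pg pd pt ((1:ℤ)::w) f =
      pa * ∑ f with IsRST ((-1:ℤ)::w) f ∧ f 0 0 = some Greek.G,
        wt pa pb pg pd pt ((-1:ℤ)::w) f := by
  rw [mul_sum, mul_sum]
  refine sum_bij' (fun f _ => setCorner Greek.G f) (fun f _ => setCorner Greek.A f)
    ?_ ?_ ?_ ?_ ?_
  · intro f hf
    simp only [mem_filter, mem_univ, true_and] at hf ⊢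
    exact ⟨isRST_setCorner one_ne_zero (by norm_num) hf.1 (Or.inr rfl) (fun _ => Or.inr rfl)
      (by norm_num), setCorner_zero_zero _ _⟩
  · intro f hf
    simp only [mem_filter, mem_univ, true_and] at hf ⊢
    exact ⟨isRST_setCorner (by norm_num) one_ne_zero hf.1 (Or.inl rfl) (by norm_num)
      (fun _ => Or.inl rfl), setCorner_zero_zero _ _⟩
  · intro f hf
    exact setCorner_setCorner _ _ f (mem_filter.mp hf).2.2
  · intro f hf
    exact setCorner_setCorner _ _ f (mem_filter.mp hf).2.2
  · intro f hf
    exact wt_setCorner pa pb pg pd pt one_ne_zero (by norm_num) (Or.inl rfl) (Or.inr rfl)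
      (mem_filter.mp hf).2.2

theorem RR_one_cons_sub_RR_neg_one_cons (w : List ℤ) :
    pg * RR pa pb pg pd pt ((1:ℤ)::w) - pa * RR pa pb pg pd pt ((-1:ℤ)::w) =
      (pg * pd - pa * pb * pt ^ (w.length + nzeros w)) * RR pa pb pg pd pt w := by
  have h1 : (1:ℤ) ≠ 0 := one_ne_zero
  have hm1 : (-1:ℤ) ≠ 0 := by norm_num
  rw [RR_eq_sum_corner pa pb pg pd pt (fun f hf => hf.2.2.1 0 rfl) (g₁ := Greek.A)
      (g₂ := Greek.D) (by simp),
    RR_eq_sum_corner pa pb pg pd pt (fun f hf => (hf.2.1 0 rfl).symm) (g₁ := Greek.G)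
      (g₂ := Greek.B) (by simp),
    sum_wt_corner_BD pa pb pg pd pt h1 (Or.inr rfl) (by norm_num) (fun _ => Or.inr rfl)
      fun f hf h => hf.wt_of_corner_D pa pb pg pd pt h1 h,
    sum_wt_corner_BD pa pb pg pd pt hm1 (Or.inl rfl) (fun _ => Or.inl rfl) (by norm_num)
      fun f hf h => hf.wt_of_corner_B pa pb pg pd pt hm1 h,
    mul_add, mul_add, sum_wt_corner_A_eq_sum_wt_corner_G]
  ring

end Tableaux

section Normalization

variable {K : Type*} [Field K] (α β γ δ t : K)

lemma Rt_cons_of_ne_zero {s : ℤ} (hs : s ≠ 0) (u : List ℤ) :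
    Rt α β γ δ t (s::u) = (t - 1) / (α * β * t ^ (u.length + nzeros u) - γ * δ) *
      ((t - 1) ^ (u.length - nzeros u) /
        ∏ i ∈ Ico (2 * nzeros u) (u.length + nzeros u), (α * β * t ^ i - γ * δ)) *
      RR α β γ δ t (s::u) := by
  have hnz : nzeros (s::u) = nzeros u := by simp [nzeros, hs]
  have hle : nzeros u ≤ u.length := List.count_le_length
  rw [Rt, hnz, List.length_cons, show u.length + 1 + nzeros u = u.length + nzeros u + 1 by omega,
    prod_Ico_succ_top (by omega), show u.length + 1 - nzeros u = u.length - nzeros u + 1 by omega,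
    pow_succ, mul_div_mul_comm, mul_comm ((t - 1) ^ _ / _)]

variable {α β γ δ t}

theorem Rt_one_cons {a c : K} (hα : α = -(a * c) * γ) (hγ : (a - 1) * (c - 1) * γ = 1 - t)
    (hγ₀ : γ ≠ 0) (u : List ℤ)
    (hlam : α * β * t ^ (u.length + nzeros u) - γ * δ ≠ 0) :
    Rt α β γ δ t ((1:ℤ)::u) =
      (a - 1) * (c - 1) * Rt α β γ δ t u - a * c * Rt α β γ δ t ((-1:ℤ)::u) := by
  have hrec := RR_one_cons_sub_RR_neg_one_cons α β γ δ t u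
  rw [Rt_cons_of_ne_zero α β γ δ t one_ne_zero, Rt_cons_of_ne_zero α β γ δ t (by norm_num),
    Rt]
  set C := (t - 1) ^ (u.length - nzeros u) /
    ∏ i ∈ Ico (2 * nzeros u) (u.length + nzeros u), (α * β * t ^ i - γ * δ)
  set L := α * β * t ^ (u.length + nzeros u) - γ * δ
  field_simp
  refine mul_left_cancel₀ hγ₀ ?_
  linear_combination (t - 1) * C * hrec + (t - 1) * C * RR α β γ δ t ((-1:ℤ)::u) * hα -
    C * L * RR α β γ δ t u * hγ

end Normalization

section GenericParameters

lemma algebraMap_ne_zero_of_eval_ne_zero {σ : Type*} {p : MvPolynomial σ ℚ} (v : σ → ℚ)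
    (h : MvPolynomial.eval v p ≠ 0) :
    algebraMap (MvPolynomial σ ℚ) (FractionRing (MvPolynomial σ ℚ)) p ≠ 0 := by
  rw [ne_eq, IsFractionRing.to_map_eq_zero_iff]
  rintro rfl
  exact h (map_zero _)

lemma gen6_ne_zero (k : Fin 6) : gen6 k ≠ 0 :=
  algebraMap_ne_zero_of_eval_ne_zero (fun _ => 1) (by simp)

lemma gen6_sub_one_ne_zero (k : Fin 6) : gen6 k - 1 ≠ 0 := by
  rw [gen6, ← map_one (algebraMap (MvPolynomial (Fin 6) ℚ) K6), ← map_sub]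
  exact algebraMap_ne_zero_of_eval_ne_zero (fun _ => 2) (by norm_num)

lemma one_sub_pT_ne_zero : 1 - pT ≠ 0 :=
  sub_ne_zero.mpr (sub_ne_zero.mp (gen6_sub_one_ne_zero 5)).symm

lemma chG_ne_zero : chG ≠ 0 :=
  div_ne_zero one_sub_pT_ne_zero (mul_ne_zero (gen6_sub_one_ne_zero 0) (gen6_sub_one_ne_zero 2))

lemma chD_ne_zero : chD ≠ 0 :=
  div_ne_zero one_sub_pT_ne_zero (mul_ne_zero (gen6_sub_one_ne_zero 1) (gen6_sub_one_ne_zero 3))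

lemma chA_mul_chB_mul_pow_sub_ne_zero (i : ℕ) : chA * chB * pT ^ i - chG * chD ≠ 0 := by
  have habcd : pA * pB * pC * pD * pT ^ i - 1 ≠ 0 := by
    have h : pA * pB * pC * pD * pT ^ i - 1 = algebraMap (MvPolynomial (Fin 6) ℚ) K6
        (.X 0 * .X 1 * .X 2 * .X 3 * .X 5 ^ i - 1) := by
      simp only [map_sub, map_one, map_mul, map_pow]
      rfl
    rw [h]
    exact algebraMap_ne_zero_of_eval_ne_zero (fun k => if k = 5 then 1 else 2)
      (by norm_num [Fin.ext_iff])
  have h : chA * chB * pT ^ i - chG * chD = chG * chD * (pA * pB * pC * pD * pT ^ i - 1) := by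
    unfold chA chB chG chD
    ring
  rw [h]
  exact mul_ne_zero (mul_ne_zero chG_ne_zero chD_ne_zero) habcd

theorem Rt_ch_one_cons (u : List ℤ) :
    Rt chA chB chG chD pT ((1:ℤ)::u) =
      (pA - 1) * (pC - 1) * Rt chA chB chG chD pT u -
        pA * pC * Rt chA chB chG chD pT ((-1:ℤ)::u) :=
  Rt_one_cons (a := pA) (c := pC) (mul_div_assoc _ _ _)
    (mul_div_cancel₀ _ (mul_ne_zero (gen6_sub_one_ne_zero 0) (gen6_sub_one_ne_zero 2)))
    chG_ne_zero u (chA_mul_chB_mul_pow_sub_ne_zero _)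

end GenericParameters

section LaurentPolynomials

variable {K : Type*} [Field K] {N : ℕ}

lemma CC_eq_algebraMap (c : K) : (CC c : Lp K N) = algebraMap K (Lp K N) c := rfl

lemma CC_mul (c : K) (f : Lp K N) : CC c * f = c • f := by
  rw [CC_eq_algebraMap, Algebra.smul_def]

def indepSubalgebra (v : Fin N) : Subalgebra K (Lp K N) where
  carrier := {f | IndepVar f v}
  mul_mem' {f g} hf hg m hm := by
    classical
    obtain ⟨m₁, hm₁, m₂, hm₂, rfl⟩ :=
      mem_add.mp (AddMonoidAlgebra.support_coeff_mul_subset f g (Finsupp.mem_support_iff.mpr hm))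
    simp [hf m₁ (Finsupp.mem_support_iff.mp hm₁), hg m₂ (Finsupp.mem_support_iff.mp hm₂)]
  add_mem' {f g} hf hg m hm := by
    by_cases hfm : coeff f m = 0
    · exact hg m fun hgm => hm (by
        rw [coeff, AddMonoidAlgebra.coeff_add, Finsupp.add_apply]
        exact (congrArg₂ (· + ·) hfm hgm).trans (add_zero 0))
    · exact hf m hfm
  algebraMap_mem' c m hm := by
    by_contra hmv
    exact hm (Finsupp.single_eq_of_ne fun h => hmv (h ▸ rfl))

lemma single_mem_indepSubalgebra {v : Fin N} {m : Fin N → ℤ} (hm : m v = 0) (c : K) :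
    AddMonoidAlgebra.single m c ∈ indepSubalgebra v := fun m' hm' => by
  by_contra h
  exact hm' (Finsupp.single_eq_of_ne fun h' => h (h' ▸ hm))

variable {q : K} {v : Fin N}

variable (q v) in
def dd0Linear : Lp K N →ₗ[K] Lp K N :=
  Finsupp.linearCombination K (dd0Mono q v) ∘ₗ
    (AddMonoidAlgebra.coeffLinearEquiv K).toLinearMap

lemma dd0Linear_apply (f : Lp K N) : dd0Linear q v f = dd0 q v f := by
  simp [dd0Linear, dd0, Finsupp.linearCombination_apply, CC_mul]

lemma dd0_single (m : Fin N → ℤ) (c : K) :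
    dd0 q v (AddMonoidAlgebra.single m c) = c • dd0Mono q v m := by
  rw [← dd0Linear_apply]
  simp [dd0Linear]

lemma dd0Mono_of_eq_zero {m : Fin N → ℤ} (h : m v = 0) : dd0Mono q v m = (0 : Lp K N) := by
  simp [dd0Mono, h]

lemma dd0Mono_of_eq_neg_one {m : Fin N → ℤ} (h : m v = -1) :
    dd0Mono q v m = -AddMonoidAlgebra.single (Function.update m v 0) (q⁻¹ : K) := by
  rw [dd0Mono, if_neg (by omega), show (-(m v)).toNat = 1 by omega, range_one, sum_singleton]
  norm_num [h]

lemma dd0_of_mem {g : Lp K N} (hg : g ∈ indepSubalgebra v) : dd0 q v g = 0 :=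
  Finset.sum_eq_zero fun m hm => by
    simp only [dd0Mono_of_eq_zero (hg m (Finsupp.mem_support_iff.mp hm)), mul_zero]

lemma dd0_Zinv_mul_single {m : Fin N → ℤ} (hm : m v = 0) (c : K) :
    dd0 q v (Zinv v * AddMonoidAlgebra.single m c) = -q⁻¹ • AddMonoidAlgebra.single m c := by
  have hupd : Function.update (Pi.single v (-1) + m) v 0 = m := by
    ext k
    by_cases hk : k = v
    · subst hk; simp [hm]
    · simp [hk]
  rw [Zinv, AddMonoidAlgebra.single_mul_single, one_mul, dd0_single,
    dd0Mono_of_eq_neg_one (by simp [hm]), hupd, smul_neg, AddMonoidAlgebra.smul_single',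
    neg_smul, AddMonoidAlgebra.smul_single', mul_comm]

lemma dd0_Zinv_mul {g : Lp K N} (hg : g ∈ indepSubalgebra v) :
    dd0 q v (Zinv v * g) = -q⁻¹ • g := by
  rw [← AddMonoidAlgebra.sum_coeff_single g, Finsupp.sum, mul_sum, ← dd0Linear_apply, map_sum,
    smul_sum]
  refine sum_congr rfl fun m hm => ?_
  rw [dd0Linear_apply, dd0_Zinv_mul_single (hg m (Finsupp.mem_support_iff.mp hm))]

variable (q v) in
def T0Linear (a c : K) : Lp K N →ₗ[K] Lp K N :=
  LinearMap.mulLeft K (CC (-(a * c) / q)) +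
    LinearMap.mulLeft K (CC (a + c) - Z v - CC (a * c) * Zinv v) ∘ₗ dd0Linear q v

lemma T0Linear_apply (a c : K) (f : Lp K N) : T0Linear q v a c f = T0 a c q v f := by
  simp [T0Linear, T0, dd0Linear_apply]

lemma CC_mul_T0_of_mem {a c : K} (hq : q ≠ 0) {g : Lp K N} (hg : g ∈ indepSubalgebra v) :
    CC q * T0 a c q v g = CC (-(a * c)) * g := by
  rw [T0, dd0_of_mem hg, mul_zero, add_zero, ← mul_assoc, CC_eq_algebraMap, CC_eq_algebraMap,
    CC_eq_algebraMap, ← map_mul, mul_div_cancel₀ _ hq]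

lemma CC_mul_T0_Zinv_mul {a c : K} (hq : q ≠ 0) {g : Lp K N} (hg : g ∈ indepSubalgebra v) :
    CC q * T0 a c q v (Zinv v * g) = (Z v - CC (a + c)) * g := by
  have hq' : algebraMap K (Lp K N) q * algebraMap K (Lp K N) q⁻¹ = 1 := by
    rw [← map_mul, mul_inv_cancel₀ hq, map_one]
  rw [T0, dd0_Zinv_mul hg]
  simp only [CC_eq_algebraMap, Algebra.smul_def, div_eq_mul_inv, map_neg, map_mul, map_add]
  linear_combination -(algebraMap K (Lp K N) a * algebraMap K (Lp K N) c * Zinv v * g +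
    (algebraMap K (Lp K N) a + algebraMap K (Lp K N) c - Z v -
      algebraMap K (Lp K N) a * algebraMap K (Lp K N) c * Zinv v) * g) * hq'

lemma CC_mul_T0_mul_of_mem {a c rn r₀ rp : K} (hq : q ≠ 0)
    (hr : rp = (a - 1) * (c - 1) * r₀ - a * c * rn) {g : Lp K N} (hg : g ∈ indepSubalgebra v) :
    CC q * T0 a c q v ((CC rn + CC r₀ * (Zinv v - 1)) * g) =
      (CC rp + CC r₀ * (Z v - 1)) * g := by
  have hsplit :
      (CC rn + CC r₀ * (Zinv v - 1)) * g = Zinv v * (CC r₀ * g) + CC (rn - r₀) * g := by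
    simp only [CC_eq_algebraMap, map_sub]
    ring
  have hmem (r : K) : CC r * g ∈ indepSubalgebra v :=
    Subalgebra.mul_mem _ (Subalgebra.algebraMap_mem _ r) hg
  rw [hsplit, ← T0Linear_apply, map_add, T0Linear_apply, T0Linear_apply, mul_add,
    CC_mul_T0_Zinv_mul hq (hmem r₀), CC_mul_T0_of_mem hq (hmem _), hr]
  simp only [CC_eq_algebraMap, map_sub, map_mul, map_neg, map_one, map_add]
  ring

end LaurentPolynomials

section ExchangeRelation

variable {K : Type*} [Field K]

lemma wordOf_congr {N : ℕ} {μ ν : Fin N → ℤ} {S : Finset (Fin N)}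
    (h : ∀ k ∉ S, μ k = ν k) : wordOf N μ S = wordOf N ν S :=
  List.map_congr_left fun k hk => h k (by simpa using (List.mem_filter.mp hk).2)

lemma wordOf_of_zero_notMem {N : ℕ} (hN : 0 < N) (μ : Fin N → ℤ) {S : Finset (Fin N)}
    (h : ⟨0, hN⟩ ∉ S) :
    wordOf N μ S = μ ⟨0, hN⟩ :: wordOf N μ (insert ⟨0, hN⟩ S) := by
  obtain ⟨M, rfl⟩ : ∃ M, N = M + 1 := ⟨N - 1, by omega⟩
  rw [wordOf, wordOf, List.finRange_succ, List.filter_cons_of_pos (by simpa using h),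
    List.filter_cons_of_neg (by simp), List.map_cons, List.filter_map, List.filter_map]
  congr 3
  refine List.filter_congr fun k _ => ?_
  simp

lemma FF_eq_sum_erase (α β γ δ t : K) {N : ℕ} (μ : Fin N → ℤ) {v : Fin N}
    (hv : μ v ≠ 0) :
    FF α β γ δ t N μ = ∑ S ∈ ((univ.filter fun k => μ k ≠ 0).erase v).powerset,
      (CC (Rt α β γ δ t (wordOf N μ S)) + CC (Rt α β γ δ t (wordOf N μ (insert v S))) *
        (AddMonoidAlgebra.single (Pi.single v (μ v)) 1 - 1)) *
      ∏ i ∈ S, (AddMonoidAlgebra.single (Pi.single i (μ i)) (1 : K) - 1) := by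
  rw [FF, ← insert_erase (mem_filter.mpr ⟨mem_univ v, hv⟩),
    sum_powerset_insert (notMem_erase v _), erase_insert (notMem_erase v _), ← sum_add_distrib]
  refine sum_congr rfl fun S hS => ?_
  rw [prod_insert fun hvS => notMem_erase v _ (mem_powerset.mp hS hvS)]
  ring

theorem CC_mul_T0_FF_neg_one_cons {α β γ δ t a c q : K} (hq : q ≠ 0)
    (hR : ∀ u, Rt α β γ δ t ((1:ℤ)::u) =
      (a - 1) * (c - 1) * Rt α β γ δ t u - a * c * Rt α β γ δ t ((-1:ℤ)::u))
    {N : ℕ} (hN : 0 < N) (x : List ℤ) :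
    CC q * T0 a c q ⟨0, hN⟩ (FF α β γ δ t N (funOf N ((-1:ℤ)::x))) =
      FF α β γ δ t N (funOf N ((1:ℤ)::x)) := by
  set v : Fin N := ⟨0, hN⟩
  set μ := funOf N ((-1:ℤ)::x)
  set μ' := funOf N ((1:ℤ)::x)
  have hagree (k : Fin N) (hk : k ≠ v) : μ k = μ' k := by
    obtain ⟨j, hj⟩ := Nat.exists_eq_succ_of_ne_zero fun h => hk (Fin.ext h)
    simp only [μ, μ', funOf, hj, List.getD_cons_succ]
  have hV :
      (univ.filter fun k => μ k ≠ 0).erase v = (univ.filter fun k => μ' k ≠ 0).erase v := by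
    ext k
    by_cases hk : k = v <;> simp [hk, hagree]
  rw [FF_eq_sum_erase α β γ δ t μ (v := v) (by simp [μ, v, funOf]),
    FF_eq_sum_erase α β γ δ t μ' (v := v) (by simp [μ', v, funOf]), hV, ← T0Linear_apply,
    map_sum, mul_sum]
  refine sum_congr rfl fun S hS => ?_
  have hvS : v ∉ S := fun hvS => notMem_erase v _ (mem_powerset.mp hS hvS)
  have hword : wordOf N μ (insert v S) = wordOf N μ' (insert v S) :=
    wordOf_congr fun k hk => hagree k fun h => hk (h ▸ mem_insert_self v S)
  have hprod : ∏ i ∈ S, (AddMonoidAlgebra.single (Pi.single i (μ i)) 1 - 1 : Lp K N) =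
      ∏ i ∈ S, (AddMonoidAlgebra.single (Pi.single i (μ' i)) 1 - 1 : Lp K N) :=
    prod_congr rfl fun i hi => by rw [hagree i (ne_of_mem_of_not_mem hi hvS)]
  have hmem : ∏ i ∈ S, (AddMonoidAlgebra.single (Pi.single i (μ' i)) 1 - 1 : Lp K N) ∈
      indepSubalgebra v :=
    Subalgebra.prod_mem _ fun i hi => Subalgebra.sub_mem _
      (single_mem_indepSubalgebra (Pi.single_eq_of_ne (ne_of_mem_of_not_mem hi hvS).symm _) 1)
      (Subalgebra.one_mem _)
  rw [T0Linear_apply, wordOf_of_zero_notMem hN μ hvS, wordOf_of_zero_notMem hN μ' hvS, hword,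
    hprod]
  exact CC_mul_T0_mul_of_mem hq (hR _) hmem

end ExchangeRelation

/-- For a word `x` in `{-1,0,1}` of length `N-1`, over
`K = ℚ(a,b,c,d,q,t)` with the change of variables `α = -ac(1-t)/((a-1)(c-1))`,
`γ = (1-t)/((a-1)(c-1))`, `β = -bd(1-t)/((b-1)(d-1))`, `δ = (1-t)/((b-1)(d-1))`, the Noumi
operator `T̃₀` satisfies `q T̃₀(F_{∘x}) = F_{●x}`. -/
theorem statement12 (N : ℕ) (hN : 1 ≤ N) (x : List ℤ) :
    CC pQ * T0 pA pC pQ ⟨0, by omega⟩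
        (FF chA chB chG chD pT N (funOf N ((-1 : ℤ) :: x))) =
      FF chA chB chG chD pT N (funOf N ((1 : ℤ) :: x)) := by
  exact CC_mul_T0_FF_neg_one_cons (gen6_ne_zero 4) Rt_ch_one_cons _ x

end RST
end
end

section
/- Let 0 ≤ r ≤ N. For 0 ≤ k ≤ N−r, let Z_{N−k,r} = Σ_σ R(σ), the sum over all words σ ∈ {−1,0,1}^{N−k} with exactly r zeros, and set Z̃_{N−k,r} = ((t−1)^{N−k−r} / Π_{i=2r}^{N−k+r−1}(αβ t^i − γδ)) · Z_{N−k,r}. Then Σ_μ F_μ(z; t) = Σ_{k=0}^{N−r} Z̃_{N−k,r} · e_k(y_1, …, y_N), where the left-hand sum is over all words μ ∈ {−1,0,1}^N with exactly r zeros (i.e. all distinct signed permutations of (1^{N−r}, 0^r)), e_k denotes the elementary symmetric polynomial of degree k, and y_i = z_i + z_i^{−1} − 2 for 1 ≤ i ≤ N. (This sum equals the Koornwinder polynomial K_{(1^{N−r},0^r)}(z; a,b,c,d; q,t) under the standard change of variables.) -/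
open scoped BigOperators
open Finset

noncomputable section

/-!
Expanding every `F_μ` and exchanging the two sums, the deleted set `S` contributes a sum over the
words `μ` that do not vanish on `S`. Such a word is a choice of signs on `S` together with a word
`σ` of length `N - |S|` with `r` zeros on the complement, and `R̃(μ|_{S̄})` only depends on `σ`.
Summing over the signs gives `∏_{i ∈ S} ((z_i - 1) + (z_i⁻¹ - 1)) = ∏_{i ∈ S} y_i`, and summing
over `σ` gives `Z̃_{N-|S|,r}`. Grouping the sets `S` by their size `k` produces `e_k(y)`, and the
terms with `N - k < r` vanish because there are no words of length `N - k` with `r` zeros.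
-/

lemma Finset.orderEmbOfFin_orderIsoOfFin_symm {α : Type*} [LinearOrder α] (s : Finset α) {k : ℕ}
    (h : s.card = k) (x : s) : s.orderEmbOfFin h ((s.orderIsoOfFin h).symm x) = x := by
  rw [← coe_orderIsoOfFin_apply, OrderIso.apply_symm_apply]

lemma Finset.orderIsoOfFin_symm_orderEmbOfFin {α : Type*} [LinearOrder α] (s : Finset α) {k : ℕ}
    (h : s.card = k) (j : Fin k) :
    (s.orderIsoOfFin h).symm ⟨s.orderEmbOfFin h j, s.orderEmbOfFin_mem h j⟩ = j := by
  rw [(s.orderIsoOfFin h).symm_apply_eq]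
  exact Subtype.ext (coe_orderIsoOfFin_apply s h j).symm

namespace RST

section Words

variable {N m r : ℕ}

lemma mem_WordsF_iff {mu : Fin N → ℤ} :
    mu ∈ WordsF N r ↔ (∀ i, mu i = -1 ∨ mu i = 0 ∨ mu i = 1) ∧
      (univ.filter fun k => mu k = 0).card = r := by
  rw [WordsF, mem_filter, mem_image]
  constructor
  · rintro ⟨⟨g, -, rfl⟩, h2⟩
    refine ⟨fun i => ?_, h2⟩
    beta_reduce
    have := (g i).2
    omega
  · rintro ⟨h1, h2⟩
    refine ⟨⟨fun i => ⟨(mu i + 1).toNat, by rcases h1 i with h | h | h <;> simp [h]⟩,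
      mem_univ _, ?_⟩, h2⟩
    funext i
    rcases h1 i with h | h | h <;> simp [h]

lemma eq_one_or_eq_neg_one_of_mem_WordsF {mu : Fin N → ℤ} (hmu : mu ∈ WordsF N r) {i : Fin N}
    (hi : mu i ≠ 0) : mu i = 1 ∨ mu i = -1 := by
  rcases (mem_WordsF_iff.mp hmu).1 i with h | h | h <;> simp_all

lemma WordsF_eq_empty_of_lt (h : m < r) : WordsF m r = ∅ := by
  refine eq_empty_of_forall_notMem fun mu hmu => ?_
  have := card_filter_le (univ : Finset (Fin m)) (fun k => mu k = 0)
  rw [(mem_WordsF_iff.mp hmu).2, card_univ, Fintype.card_fin] at this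
  omega

lemma nzeros_map_finRange (s : Fin m → ℤ) :
    nzeros ((List.finRange m).map s) = (univ.filter fun j => s j = 0).card := by
  rw [nzeros, ← Multiset.coe_count, ← Multiset.map_coe, Multiset.count_map, card_def, filter_val,
    Fin.univ_def]
  simp only [eq_comm]

lemma filter_finRange_notMem_eq_map (S : Finset (Fin N)) (h : Sᶜ.card = m) :
    (List.finRange N).filter (fun k => decide (k ∉ S)) =
      (List.finRange m).map (Sᶜ.orderEmbOfFin h) := by
  refine List.Perm.eq_of_pairwise' (r := (· ≤ ·)) ?_ ?_
    (List.perm_of_nodup_nodup_toFinset_eq ((List.nodup_finRange N).filter _)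
      ((List.nodup_finRange m).map (Sᶜ.orderEmbOfFin h).injective) ?_)
  · exact ((List.pairwise_lt_finRange N).filter _).imp le_of_lt
  · exact (List.pairwise_map.mpr ((List.pairwise_lt_finRange m).imp
      fun hab => (Sᶜ.orderEmbOfFin h).strictMono hab)).imp le_of_lt
  · ext x
    have := congrArg (x ∈ ·) (range_orderEmbOfFin Sᶜ h)
    simp_all

lemma wordOf_eq_map_orderEmbOfFin (S : Finset (Fin N)) (h : Sᶜ.card = m) (mu : Fin N → ℤ) :
    wordOf N mu S = (List.finRange m).map (mu ∘ Sᶜ.orderEmbOfFin h) := by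
  rw [wordOf, filter_finRange_notMem_eq_map S h, List.map_map]

lemma card_zeros_comp_orderEmbOfFin (S : Finset (Fin N)) (h : Sᶜ.card = m) {mu : Fin N → ℤ}
    (hS : ∀ i ∈ S, mu i ≠ 0) :
    (univ.filter fun j => (mu ∘ Sᶜ.orderEmbOfFin h) j = 0).card =
      (univ.filter fun i => mu i = 0).card := by
  refine card_bij (fun j _ => Sᶜ.orderEmbOfFin h j) (by simp)
    (fun a _ b _ hab => (Sᶜ.orderEmbOfFin h).injective hab) fun i hi => ?_
  have hi : mu i = 0 := (mem_filter.mp hi).2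
  have hic : i ∈ Set.range (Sᶜ.orderEmbOfFin h) := by
    rw [range_orderEmbOfFin]
    simpa using fun hiS => hS i hiS hi
  obtain ⟨j, rfl⟩ := hic
  exact ⟨j, by simpa using hi, rfl⟩

def extendBySigns (S : Finset (Fin N)) (h : Sᶜ.card = m) (T : Finset (Fin N)) (s : Fin m → ℤ) :
    Fin N → ℤ :=
  fun i => if hi : i ∈ Sᶜ then s ((Sᶜ.orderIsoOfFin h).symm ⟨i, hi⟩) else if i ∈ T then 1 else -1

lemma extendBySigns_comp_orderEmbOfFin (S : Finset (Fin N)) (h : Sᶜ.card = m)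
    (T : Finset (Fin N)) (s : Fin m → ℤ) :
    extendBySigns S h T s ∘ Sᶜ.orderEmbOfFin h = s := by
  funext j
  simp [extendBySigns, Sᶜ.orderEmbOfFin_mem h j, orderIsoOfFin_symm_orderEmbOfFin]

lemma extendBySigns_of_mem {S : Finset (Fin N)} (h : Sᶜ.card = m) (T : Finset (Fin N))
    (s : Fin m → ℤ) {i : Fin N} (hi : i ∈ S) :
    extendBySigns S h T s i = if i ∈ T then 1 else -1 :=
  dif_neg (notMem_compl.mpr hi)

lemma filter_extendBySigns_eq_one {S T : Finset (Fin N)} (h : Sᶜ.card = m) (hT : T ⊆ S)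
    (s : Fin m → ℤ) : S.filter (fun i => extendBySigns S h T s i = 1) = T := by
  ext i
  by_cases hi : i ∈ S
  · by_cases hiT : i ∈ T <;> simp [extendBySigns_of_mem h T s hi, hi, hiT]
  · simpa [hi] using fun hiT => hi (hT hiT)

lemma extendBySigns_filter_comp {S : Finset (Fin N)} (h : Sᶜ.card = m) {mu : Fin N → ℤ}
    (hmu : ∀ i ∈ S, mu i = 1 ∨ mu i = -1) :
    extendBySigns S h (S.filter fun i => mu i = 1) (mu ∘ Sᶜ.orderEmbOfFin h) = mu := by
  funext i
  by_cases hi : i ∈ S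
  · rw [extendBySigns_of_mem h _ _ hi]
    rcases hmu i hi with h1 | h1 <;> simp [hi, h1]
  · have hi' : i ∈ Sᶜ := mem_compl.mpr hi
    simp [extendBySigns, hi', orderEmbOfFin_orderIsoOfFin_symm Sᶜ h ⟨i, hi'⟩]

/-- Words that do not vanish on `S` are parametrised by the set of their `1`'s in `S` and their
restriction to `Sᶜ`. -/
lemma sum_WordsF_filter_ne_zero {M : Type*} [AddCommMonoid M] (S : Finset (Fin N))
    (h : Sᶜ.card = m) (φ : Finset (Fin N) → (Fin m → ℤ) → M) :
    ∑ mu ∈ (WordsF N r).filter (fun mu => ∀ i ∈ S, mu i ≠ 0),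
        φ (S.filter fun i => mu i = 1) (mu ∘ Sᶜ.orderEmbOfFin h) =
      ∑ T ∈ S.powerset, ∑ s ∈ WordsF m r, φ T s := by
  rw [← sum_product']
  refine sum_nbij' (fun mu => (S.filter fun i => mu i = 1, mu ∘ Sᶜ.orderEmbOfFin h))
    (fun p => extendBySigns S h p.1 p.2) ?_ ?_ ?_ ?_ (fun _ _ => rfl)
  · intro mu hmu
    obtain ⟨hw, hS⟩ := mem_filter.mp hmu
    rw [mem_WordsF_iff] at hw
    simp only [mem_product, mem_powerset, filter_subset, true_and, mem_WordsF_iff,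
      card_zeros_comp_orderEmbOfFin S h hS]
    exact ⟨fun j => hw.1 _, hw.2⟩
  · rintro ⟨T, s⟩ hp
    have hs := (mem_product.mp hp).2
    have hS : ∀ i ∈ S, extendBySigns S h T s i ≠ 0 := fun i hi => by
      rw [extendBySigns_of_mem h T s hi]
      split_ifs <;> omega
    refine mem_filter.mpr ⟨mem_WordsF_iff.mpr ⟨fun i => ?_, ?_⟩, hS⟩
    · by_cases hi : i ∈ S
      · rw [extendBySigns_of_mem h T s hi]
        split_ifs <;> omega
      · simpa [extendBySigns, hi] using (mem_WordsF_iff.mp hs).1 _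
    · rw [← card_zeros_comp_orderEmbOfFin S h hS, extendBySigns_comp_orderEmbOfFin]
      exact (mem_WordsF_iff.mp hs).2
  · intro mu hmu
    obtain ⟨hw, hS⟩ := mem_filter.mp hmu
    exact extendBySigns_filter_comp h fun i hi => eq_one_or_eq_neg_one_of_mem_WordsF hw (hS i hi)
  · rintro ⟨T, s⟩ hp
    rw [filter_extendBySigns_eq_one h (mem_powerset.mp (mem_product.mp hp).1),
      extendBySigns_comp_orderEmbOfFin]

end Words

section Normalization

variable {K : Type*} [Field K] (pa pb pg pd pt : K) {N m r : ℕ}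

def normalizer (m r : ℕ) : K :=
  (pt - 1) ^ (m - r) / ∏ i ∈ Ico (2 * r) (m + r), (pa * pb * pt ^ i - pg * pd)

def Ztilde (m r : ℕ) : K :=
  normalizer pa pb pg pd pt m r * ∑ s ∈ WordsF m r, RRw pa pb pg pd pt m s

lemma Ztilde_eq_zero_of_lt (h : m < r) : Ztilde pa pb pg pd pt m r = 0 := by
  simp [Ztilde, WordsF_eq_empty_of_lt h]

lemma Rt_wordOf (S : Finset (Fin N)) (h : Sᶜ.card = m) {mu : Fin N → ℤ} (hmu : mu ∈ WordsF N r)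
    (hS : ∀ i ∈ S, mu i ≠ 0) :
    Rt pa pb pg pd pt (wordOf N mu S) =
      normalizer pa pb pg pd pt m r * RRw pa pb pg pd pt m (mu ∘ Sᶜ.orderEmbOfFin h) := by
  have hz : nzeros ((List.finRange m).map (mu ∘ Sᶜ.orderEmbOfFin h)) = r := by
    rw [nzeros_map_finRange, card_zeros_comp_orderEmbOfFin S h hS, (mem_WordsF_iff.mp hmu).2]
  rw [wordOf_eq_map_orderEmbOfFin S h, Rt, hz, List.length_map, List.length_finRange]
  rfl

end Normalization

section Laurent

variable {K : Type*} [Field K] {N : ℕ}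

lemma CC_eq_singleZeroRingHom (c : K) :
    (CC c : Lp K N) = AddMonoidAlgebra.singleZeroRingHom c := rfl

lemma prod_single_sub_one_eq (S : Finset (Fin N)) {mu : Fin N → ℤ}
    (hmu : ∀ i ∈ S, mu i = 1 ∨ mu i = -1) :
    ∏ i ∈ S, (AddMonoidAlgebra.single (Pi.single i (mu i)) (1 : K) - 1 : Lp K N) =
      (∏ i ∈ S.filter (fun i => mu i = 1), (Z i - 1)) *
        ∏ i ∈ S \ S.filter (fun i => mu i = 1), (Zinv i - 1) := by
  rw [← filter_not, ← prod_filter_mul_prod_filter_not S (fun i => mu i = 1)]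
  congr 1
  · refine prod_congr rfl fun i hi => ?_
    rw [(mem_filter.mp hi).2]
    rfl
  · refine prod_congr rfl fun i hi => ?_
    obtain ⟨hiS, h1⟩ := mem_filter.mp hi
    rw [(hmu i hiS).resolve_left h1]
    rfl

end Laurent

section ASEP

variable {K : Type*} [Field K] (pa pb pg pd pt : K) {N r : ℕ}

lemma sum_filter_ne_zero_Rt_mul_prod (S : Finset (Fin N)) :
    ∑ mu ∈ (WordsF N r).filter (fun mu => ∀ i ∈ S, mu i ≠ 0),
        CC (Rt pa pb pg pd pt (wordOf N mu S)) *
          ∏ i ∈ S, (AddMonoidAlgebra.single (Pi.single i (mu i)) (1 : K) - 1) =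
      CC (Ztilde pa pb pg pd pt (N - S.card) r) * ∏ i ∈ S, (Z i + Zinv i - (2 : Lp K N)) := by
  have h : Sᶜ.card = N - S.card := by rw [card_compl, Fintype.card_fin]
  set P : Finset (Fin N) → Lp K N := fun T => (∏ i ∈ T, (Z i - 1)) * ∏ i ∈ S \ T, (Zinv i - 1)
  calc _ = ∑ mu ∈ (WordsF N r).filter (fun mu => ∀ i ∈ S, mu i ≠ 0),
          (fun T s => CC (normalizer pa pb pg pd pt (N - S.card) r *
            RRw pa pb pg pd pt (N - S.card) s) * P T)
            (S.filter fun i => mu i = 1) (mu ∘ Sᶜ.orderEmbOfFin h) := by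
        refine sum_congr rfl fun mu hmu => ?_
        obtain ⟨hw, hS⟩ := mem_filter.mp hmu
        rw [Rt_wordOf pa pb pg pd pt S h hw hS, prod_single_sub_one_eq S
          fun i hi => eq_one_or_eq_neg_one_of_mem_WordsF hw (hS i hi)]
    _ = ∑ T ∈ S.powerset, ∑ s ∈ WordsF (N - S.card) r,
          CC (normalizer pa pb pg pd pt (N - S.card) r * RRw pa pb pg pd pt (N - S.card) s) * P T :=
        sum_WordsF_filter_ne_zero S h fun T s =>
          CC (normalizer pa pb pg pd pt (N - S.card) r * RRw pa pb pg pd pt (N - S.card) s) * P T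
    _ = CC (Ztilde pa pb pg pd pt (N - S.card) r) * ∑ T ∈ S.powerset, P T := by
        rw [mul_sum]
        refine sum_congr rfl fun T _ => ?_
        simp only [CC_eq_singleZeroRingHom, ← sum_mul, ← map_sum, ← mul_sum, Ztilde]
    _ = _ := by
        rw [← prod_add]
        exact congrArg _ (prod_congr rfl fun i _ => by ring)

lemma FF_eq_sum_powerset (mu : Fin N → ℤ) :
    FF pa pb pg pd pt N mu = ∑ S ∈ (univ : Finset (Fin N)).powerset,
      if ∀ i ∈ S, mu i ≠ 0 then CC (Rt pa pb pg pd pt (wordOf N mu S)) *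
        ∏ i ∈ S, (AddMonoidAlgebra.single (Pi.single i (mu i)) (1 : K) - 1) else 0 := by
  rw [FF, ← sum_filter]
  congr 1
  ext S
  simp [subset_iff]

lemma sum_FF_eq_sum_range_card :
    ∑ mu ∈ WordsF N r, FF pa pb pg pd pt N mu =
      ∑ k ∈ range (N + 1), CC (Ztilde pa pb pg pd pt (N - k) r) *
        ∑ S ∈ powersetCard k (univ : Finset (Fin N)), ∏ i ∈ S, (Z i + Zinv i - (2 : Lp K N)) := by
  simp only [FF_eq_sum_powerset]
  rw [sum_comm, sum_powerset, card_univ, Fintype.card_fin]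
  refine sum_congr rfl fun k _ => ?_
  rw [mul_sum]
  refine sum_congr rfl fun S hS => ?_
  rw [← sum_filter, sum_filter_ne_zero_Rt_mul_prod, (mem_powersetCard.mp hS).2]

end ASEP

theorem statement18_general (N r : ℕ) :
    ∑ mu ∈ WordsF N r, FF vA vB vG vD vT N mu =
      ∑ k ∈ Finset.range (N - r + 1),
        CC (((vT - 1) ^ (N - k - r) /
              ∏ i ∈ Finset.Ico (2 * r) (N - k + r), (vA * vB * vT ^ i - vG * vD)) *
            ∑ s ∈ WordsF (N - k) r, RRw vA vB vG vD vT (N - k) s) *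
          ∑ S ∈ Finset.powersetCard k (Finset.univ : Finset (Fin N)),
            ∏ i ∈ S, (Z i + Zinv i - (2 : Lp K5 N)) := by
  rw [sum_FF_eq_sum_range_card]
  refine (sum_subset (range_subset_range.mpr (by omega)) fun k hk hk' => ?_).symm
  rw [mem_range] at hk hk'
  rw [Ztilde_eq_zero_of_lt _ _ _ _ _ (by omega), CC_eq_singleZeroRingHom, map_zero, zero_mul]

/-- Let `0 ≤ r ≤ N`.  The sum of the open boundary ASEP polynomials `F_μ`
over all words `μ ∈ {-1,0,1}^N` with exactly `r` zeros (i.e. the Koornwinder polynomial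
`K_{(1^{N-r},0^r)}` under the standard change of variables) equals
`∑_{k=0}^{N-r} Z̃_{N-k,r} e_k(y₁,…,y_N)` where `y_i = z_i + z_i⁻¹ - 2`,
`Z̃_{m,r} = ((t-1)^{m-r}/∏_{i=2r}^{m+r-1}(αβt^i - γδ)) ∑_{σ} R(σ)` and the last sum is over
all words `σ ∈ {-1,0,1}^m` with exactly `r` zeros. -/
theorem statement18 (N r : ℕ) (hr : r ≤ N) :
    ∑ mu ∈ WordsF N r, FF vA vB vG vD vT N mu =
      ∑ k ∈ Finset.range (N - r + 1),
        CC (((vT - 1) ^ (N - k - r) /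
              ∏ i ∈ Finset.Ico (2 * r) (N - k + r), (vA * vB * vT ^ i - vG * vD)) *
            ∑ s ∈ WordsF (N - k) r, RRw vA vB vG vD vT (N - k) s) *
          ∑ S ∈ Finset.powersetCard k (Finset.univ : Finset (Fin N)),
            ∏ i ∈ S, (Z i + Zinv i - (2 : Lp K5 N)) :=
  statement18_general N r

end RST
end
end
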